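/- arXiv:math/0111166 — 6 statements merged into one kernel-verified Lean document; each statement's English description precedes it below -/
import Mathlib

section
/- In any acyclic matching W on the face poset of a regular CW complex (with empty face included), not all 0-cells can be matched with 1-cells. -/
/-!
If every 0-cell `v` were matched with a 1-cell `τ v`, regularity would give a second 0-cell
`next v ≠ v` below `τ v`. The map `next` on the finite set of 0-cells has a periodic point, of
period at least 2 because `next` has no fixed points, and its orbit
`v, τ v, next v, τ (next v), …` is a cycle of the matching.
-/

/-- A composition of `n`: an ordered list of positive integers summing to `n`. -/
def IsComposition (n : ℕ) (l : List ℕ) : Prop :=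
  (∀ x ∈ l, 0 < x) ∧ l.sum = n

/-- Refinement order on compositions: `Refines x y` means `x ≤ y` in the paper's order,
i.e. the blocks of `x` are sums of consecutive runs of blocks of `y`.  The witness `P`
is the list of (nonempty) consecutive runs. -/
def Refines (x y : List ℕ) : Prop :=
  ∃ P : List (List ℕ), (∀ p ∈ P, p ≠ []) ∧ P.flatten = y ∧ P.map List.sum = x

/-- `Dset lam` is the poset `D_λ`: all compositions lying below some composition of type `lam`. -/
def Dset (lam : Multiset ℕ) : Set (List ℕ) :=
  {x | ∃ y : List ℕ, (y : Multiset ℕ) = lam ∧ Refines x y}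

/-- The set of cut positions `{i₁,…,i_{l(x)-1}}` of a refinement witness `P`. -/
def cutSet (P : List (List ℕ)) : Finset ℕ :=
  ((List.range (P.length - 1)).map (fun k => ((P.take (k + 1)).map List.length).sum)).toFinset

/-- The block at position `i` of the composition `l` is independent: any resonance with
`l[i]` on the left side forces a trivial resonance with a block on the right side. -/
def IsIndepAt (l : List ℕ) (i : ℕ) : Prop :=
  ∀ I J : Finset ℕ, I.Nonempty → J.Nonempty → Disjoint I J →
    (∀ a ∈ I ∪ J, a < l.length) → i ∈ I →
    (I.sum fun a => l.getD a 0) = (J.sum fun a => l.getD a 0) →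
    ∃ q ∈ J, l.getD q 0 = l.getD i 0

/-- `ι(x)`: the smallest index of a block of `x` equal to `v` (`⊤` if none). -/
noncomputable def iotaFn (v : ℕ) (x : List ℕ) : ℕ∞ :=
  sInf {j : ℕ∞ | ∃ k : ℕ, j = (k : ℕ∞) ∧ x.getD k 0 = v}

/-- Block `k` of `x ∈ D_λ` contains a copy of `v`: for every composition of type `lam`
refining `x`, the run summing to block `k` contains an entry equal to `v`. -/
def HasCopy (lam : Multiset ℕ) (v : ℕ) (x : List ℕ) (k : ℕ) : Prop :=
  ∀ P : List (List ℕ), (∀ p ∈ P, p ≠ []) → ((P.flatten : Multiset ℕ) = lam) →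
    P.map List.sum = x → v ∈ P.getD k []

/-- `γ(x)`: the smallest index of a block of `x` strictly larger than `v` containing
at least one copy of `v` (`⊤` if none). -/
noncomputable def gammaFn (lam : Multiset ℕ) (v : ℕ) (x : List ℕ) : ℕ∞ :=
  sInf {j : ℕ∞ | ∃ k : ℕ, j = (k : ℕ∞) ∧ v < x.getD k 0 ∧ HasCopy lam v x k}

/-- Split block `j` of `x` into `v` followed by the remainder. -/
def splitBlock (v : ℕ) (x : List ℕ) (j : ℕ) : List ℕ :=
  x.take j ++ [v, x.getD j 0 - v] ++ x.drop (j + 1)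

/-- A number partition of `n`: a multiset of positive integers summing to `n`. -/
def IsPartition (n : ℕ) (lam : Multiset ℕ) : Prop :=
  (∀ a ∈ lam, 0 < a) ∧ lam.sum = n

/-- Refinement order on number partitions: `PartCoarsen mu lam` means `lam ≥ mu`,
i.e. the blocks of `lam` can be grouped into disjoint nonempty sets summing to the
blocks of `mu`. -/
def PartCoarsen (mu lam : Multiset ℕ) : Prop :=
  ∃ P : Multiset (Multiset ℕ), (∀ p ∈ P, p ≠ 0) ∧ P.sum = lam ∧ P.map Multiset.sum = mu

/-- The cutting condition for the pair `(lam, pb)` where `pb` is a block of `lam`. -/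
def CuttingCondition (lam : Multiset ℕ) (pb : ℕ) : Prop :=
  pb ∈ lam ∧
  ∀ (mu : Multiset ℕ) (eta : ℕ) (I : Multiset ℕ),
    PartCoarsen mu lam → eta ∈ mu → I ≠ 0 → I ≤ lam.erase pb → eta = pb + I.sum →
      PartCoarsen (pb ::ₘ (I.sum ::ₘ mu.erase eta)) lam

/-- The vector in `ℚ^l` associated to the resonance `(I, J)`. -/
def resVec (l : ℕ) (I J : Finset (Fin l)) : Fin l → ℚ :=
  fun i => if i ∈ I then 1 else if i ∈ J then -1 else 0

namespace Function

theorem exists_mem_periodicPts {β : Type*} [Finite β] [Nonempty β] (f : β → β) :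
    ∃ x, x ∈ periodicPts f := by
  obtain ⟨m, n, hmn, heq⟩ :=
    Set.finite_univ.exists_lt_map_eq_of_forall_mem (f := fun k => f^[k] (Classical.arbitrary β))
      fun _ => Set.mem_univ _
  refine ⟨f^[m] (Classical.arbitrary β), mk_mem_periodicPts (n := n - m) (by omega) ?_⟩
  rw [IsPeriodicPt, IsFixedPt, ← iterate_add_apply, Nat.sub_add_cancel hmn.le]
  exact heq.symm

theorem exists_isPeriodicPt_of_forall_ne {β : Type*} [Finite β] [Nonempty β] (f : β → β)
    (hf : ∀ x, f x ≠ x) : ∃ x n, 2 ≤ n ∧ IsPeriodicPt f n x := by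
  obtain ⟨x, hx⟩ := exists_mem_periodicPts f
  have hpos := minimalPeriod_pos_of_mem_periodicPts hx
  have hne_one : minimalPeriod f x ≠ 1 := mt minimalPeriod_eq_one_iff_isFixedPt.mp (hf x)
  exact ⟨x, minimalPeriod f x, by omega, isPeriodicPt_minimalPeriod f x⟩

end Function

def HasMatchingCycle {α : Type*} [LT α] (M : Set (α × α)) : Prop :=
  ∃ (t : ℕ) (σ τ : ℕ → α), 2 ≤ t ∧ σ 0 = σ t ∧ σ 0 ≠ σ 1 ∧
    ∀ i < t, (σ i, τ i) ∈ M ∧ σ (i + 1) ⋖ τ i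

theorem hasMatchingCycle_of_forall_matched {α : Type*} [LT α] (M : Set (α × α)) (V : Set α)
    [Finite V] [Nonempty V]
    (hV : ∀ v ∈ V, ∃ τ, (v, τ) ∈ M ∧ ∃ w ∈ V, w ≠ v ∧ w ⋖ τ) : HasMatchingCycle M := by
  choose partner hpartner next hnextV hnext_ne hnext_cov using hV
  let f : V → V := fun v => ⟨next v v.2, hnextV v v.2⟩
  obtain ⟨x, t, ht, hper⟩ :=
    Function.exists_isPeriodicPt_of_forall_ne f fun v h => hnext_ne v v.2 (congrArg Subtype.val h)
  refine ⟨t, fun k => (f^[k] x).1, fun k => partner (f^[k] x) (f^[k] x).2, ht,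
    congrArg Subtype.val hper.symm, fun h => hnext_ne x x.2 h.symm, fun i _ => ⟨hpartner _ _, ?_⟩⟩
  simp only [Function.iterate_succ_apply']
  exact hnext_cov _ _

theorem acyclic_matching_unmatched_vertex_general {α : Type*} [PartialOrder α] [Fintype α]
    [OrderBot α] (M : Finset (α × α))
    (hcov : ∀ p ∈ M, p.1 ⋖ p.2)
    (htwo : ∀ e v : α, ⊥ ⋖ v → v ⋖ e → ∃ w : α, w ≠ v ∧ ⊥ ⋖ w ∧ w ⋖ e)
    (hne : ∃ v : α, ⊥ ⋖ v)
    (hacyclic : ¬ ∃ (t : ℕ) (σ τ : ℕ → α), 2 ≤ t ∧ σ 0 = σ t ∧ σ 0 ≠ σ 1 ∧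
      ∀ i < t, (σ i, τ i) ∈ M ∧ σ (i + 1) ⋖ τ i) :
    ∃ v : α, ⊥ ⋖ v ∧ ∀ τ : α, (v, τ) ∉ M := by
  by_contra! hmatched
  obtain ⟨v₀, hv₀⟩ := hne
  have : Nonempty {v : α | ⊥ ⋖ v} := ⟨⟨v₀, hv₀⟩⟩
  refine hacyclic (hasMatchingCycle_of_forall_matched (M : Set (α × α)) {v | ⊥ ⋖ v} ?_)
  intro v hv
  obtain ⟨τ, hvτ⟩ := hmatched v hv
  obtain ⟨w, hwv, hw, hwτ⟩ := htwo τ v hv (hcov _ hvτ)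
  exact ⟨τ, hvτ, w, hw, hwv, hwτ⟩

/-- in an acyclic matching on (the face poset of) a regular CW complex,
not all 0-cells are matched upward with 1-cells.  Formalized for an abstract finite
poset with a bottom element (the empty face): 0-cells are the elements covering the
bottom, and any 1-cell covering a 0-cell covers a second 0-cell (regularity). -/
theorem acyclic_matching_unmatched_vertex {α : Type*} [PartialOrder α] [Fintype α]
    [OrderBot α] (M : Finset (α × α))
    (hcov : ∀ p ∈ M, p.1 ⋖ p.2)
    (hdisj : ∀ p ∈ M, ∀ q ∈ M, p ≠ q →
      p.1 ≠ q.1 ∧ p.1 ≠ q.2 ∧ p.2 ≠ q.1 ∧ p.2 ≠ q.2)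
    (htwo : ∀ e v : α, ⊥ ⋖ v → v ⋖ e → ∃ w : α, w ≠ v ∧ ⊥ ⋖ w ∧ w ⋖ e)
    (hne : ∃ v : α, ⊥ ⋖ v)
    (hacyclic : ¬ ∃ (t : ℕ) (σ τ : ℕ → α), 2 ≤ t ∧ σ 0 = σ t ∧ σ 0 ≠ σ 1 ∧
      ∀ i < t, (σ i, τ i) ∈ M ∧ σ (i + 1) ⋖ τ i) :
    ∃ v : α, ⊥ ⋖ v ∧ ∀ τ : α, (v, τ) ∉ M :=
  acyclic_matching_unmatched_vertex_general M hcov htwo hne hacyclic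
end

section
/- Let λ = (π₁,…,π_t) be a number partition of n in which the block π₁ is independent and π₁ = π_i for some 2 ≤ i ≤ t. Then the matching W on D_λ, pairing each composition a with ι(a) > γ(a) to the composition b obtained by splitting the block of a at position γ(a) into π₁ followed by the remainder, is a complete matching on D_λ. -/
set_option linter.unusedSectionVars false
set_option maxHeartbeats 1000000


lemma sInfS_le {p : ℕ → Prop} {k : ℕ} (hk : p k) :
    sInf {j : ℕ∞ | ∃ k : ℕ, j = (k : ℕ∞) ∧ p k} ≤ (k : ℕ∞) :=
  sInf_le ⟨k, rfl, hk⟩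

lemma sInfS_top {p : ℕ → Prop} (h : ∀ k, ¬ p k) :
    sInf {j : ℕ∞ | ∃ k : ℕ, j = (k : ℕ∞) ∧ p k} = ⊤ := by
  have : {j : ℕ∞ | ∃ k : ℕ, j = (k : ℕ∞) ∧ p k} = ∅ := by
    ext j; simp only [Set.mem_setOf_eq, Set.mem_empty_iff_false, iff_false]
    rintro ⟨k, _, hk⟩; exact h k hk
  rw [this]; exact sInf_empty

lemma sInfS_spec {p : ℕ → Prop} (h : ∃ k, p k) :
    ∃ n : ℕ, sInf {j : ℕ∞ | ∃ k : ℕ, j = (k : ℕ∞) ∧ p k} = (n : ℕ∞) ∧ p n ∧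
      ∀ m < n, ¬ p m := by
  classical
  set n := sInf {k | p k} with hn
  refine ⟨n, ?_, Nat.sInf_mem h, fun m hm => Nat.notMem_of_lt_sInf hm⟩
  apply le_antisymm (sInfS_le (Nat.sInf_mem h))
  apply le_sInf
  rintro j ⟨m, rfl, hm⟩
  exact_mod_cast Nat.sInf_le hm

lemma sInfS_lt_top {p : ℕ → Prop} (h : sInf {j : ℕ∞ | ∃ k : ℕ, j = (k : ℕ∞) ∧ p k} < ⊤) :
    ∃ n : ℕ, sInf {j : ℕ∞ | ∃ k : ℕ, j = (k : ℕ∞) ∧ p k} = (n : ℕ∞) ∧ p n ∧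
      ∀ m < n, ¬ p m := by
  by_cases he : ∃ k, p k
  · exact sInfS_spec he
  · rw [sInfS_top (not_exists.mp he)] at h; exact absurd h (lt_irrefl _)


lemma map_range_getD (l : List ℕ) :
    (List.range l.length).map (fun i => l.getD i 0) = l := by
  apply List.ext_getElem
  · simp
  · intro i h1 h2
    simp [List.getD_eq_getElem, List.getElem?_eq_getElem h2]

lemma exists_realization (l : List ℕ) :
    ∀ (A : Multiset ℕ) (S : Finset ℕ), (∀ i ∈ S, i < l.length) →
      A + S.val.map (fun i => l.getD i 0) ≤ (l : Multiset ℕ) →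
      ∃ I : Finset ℕ, Disjoint I S ∧ (∀ i ∈ I, i < l.length) ∧
        I.val.map (fun i => l.getD i 0) = A := by
  intro A
  induction A using Multiset.induction_on with
  | empty =>
    intro S _ _
    exact ⟨∅, by simp, by simp, by simp⟩
  | cons a A ih =>
    intro S hS hle
    set f : ℕ → ℕ := fun i => l.getD i 0 with hf
    -- find an index i ∉ S, i < l.length, f i = a
    have hSsub : S ⊆ Finset.range l.length := fun i hi => Finset.mem_range.mpr (hS i hi)
    have hval : (Finset.range l.length).val = ((Finset.range l.length) \ S).val + S.val := by
      have h2 : S.val ≤ (Finset.range l.length).val := Finset.val_le_iff.mpr hSsub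
      rw [Finset.sdiff_val, tsub_add_cancel_of_le h2]
    have hrange : (Finset.range l.length).val.map f = (l : Multiset ℕ) := by
      rw [Finset.range_val, Multiset.range, Multiset.map_coe, map_range_getD]
    have hmem : a ∈ ((Finset.range l.length) \ S).val.map f := by
      rw [← Multiset.one_le_count_iff_mem]
      have h1 : Multiset.count a ((a ::ₘ A) + S.val.map f) ≤ Multiset.count a (l : Multiset ℕ) :=
        Multiset.le_iff_count.mp hle a
      rw [← hrange, hval, Multiset.map_add, Multiset.count_add] at h1
      simp only [Multiset.count_add, Multiset.count_cons_self] at h1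
      omega
    obtain ⟨i, hi, hfi⟩ := Multiset.mem_map.mp hmem
    have hiS : i ∉ S := (Finset.mem_sdiff.mp hi).2
    have hilen : i < l.length := Finset.mem_range.mp (Finset.mem_sdiff.mp hi).1
    have hins : (insert i S).val = i ::ₘ S.val := Finset.insert_val_of_notMem hiS
    obtain ⟨I', hdisj, hIlen, hIval⟩ := ih (insert i S)
      (by intro j hj
          rcases Finset.mem_insert.mp hj with rfl | hj
          · exact hilen
          · exact hS j hj)
      (by rw [hins, Multiset.map_cons, hfi]
          calc A + (a ::ₘ S.val.map f) = (a ::ₘ A) + S.val.map f := by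
                rw [Multiset.cons_add, Multiset.add_cons]
           _ ≤ _ := hle)
    have hiI' : i ∉ I' := fun h => (Finset.disjoint_left.mp hdisj h) (Finset.mem_insert_self i S)
    refine ⟨insert i I', ?_, ?_, ?_⟩
    · rw [Finset.disjoint_left]
      intro j hj
      rcases Finset.mem_insert.mp hj with rfl | hj
      · exact hiS
      · exact fun hjS => (Finset.disjoint_left.mp hdisj hj) (Finset.mem_insert_of_mem hjS)
    · intro j hj
      rcases Finset.mem_insert.mp hj with rfl | hj
      · exact hilen
      · exact hIlen j hj
    · rw [Finset.insert_val_of_notMem hiI', Multiset.map_cons, hfi, hIval]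

lemma mem_Dset_iff {lam : Multiset ℕ} {x : List ℕ} :
    x ∈ Dset lam ↔ ∃ P : List (List ℕ), (∀ p ∈ P, p ≠ []) ∧
      ((P.flatten : Multiset ℕ) = lam) ∧ P.map List.sum = x := by
  constructor
  · rintro ⟨y, hy, P, hne, hflat, hsum⟩
    exact ⟨P, hne, by rw [hflat, hy], hsum⟩
  · rintro ⟨P, hne, hflat, hsum⟩
    exact ⟨P.flatten, hflat, P, hne, rfl, hsum⟩


def mergeBlock (x : List ℕ) (j : ℕ) : List ℕ :=
  x.take j ++ [x.getD j 0 + x.getD (j+1) 0] ++ x.drop (j + 2)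

section seg
variable {α : Type*}

lemma getD_drop' (x : List α) (s k : ℕ) (d : α) : (x.drop s).getD k d = x.getD (s+k) d := by
  by_cases h : s + k < x.length
  · rw [List.getD_eq_getElem _ _ h, List.getD_eq_getElem _ _ (by simp; omega)]
    simp
  · rw [List.getD_eq_default _ _ (by rw [List.length_drop]; omega),
      List.getD_eq_default _ _ (by omega)]

lemma getD_take' (x : List α) {j k : ℕ} (hk : k < j) (hj : j ≤ x.length) (d : α) :
    (x.take j).getD k d = x.getD k d := by
  rw [List.getD_eq_getElem _ _ (by simp; omega), List.getD_eq_getElem _ _ (by omega)]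
  simp

lemma getD_seg_lt {x : List α} {j : ℕ} (hj : j ≤ x.length) (M B : List α) {k : ℕ}
    (hk : k < j) (d : α) : (x.take j ++ M ++ B).getD k d = x.getD k d := by
  rw [List.append_assoc, List.getD_append _ _ _ _ (by simp; omega), getD_take' x hk hj]

lemma getD_seg_right {x : List α} {j : ℕ} (hj : j ≤ x.length) (M B : List α) {k : ℕ}
    (hk : j ≤ k) (d : α) : (x.take j ++ M ++ B).getD k d = (M ++ B).getD (k - j) d := by
  rw [List.append_assoc, List.getD_append_right _ _ _ _ (by simp; omega)]
  congr 1
  simp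
  omega

lemma seg_length {x : List α} {j : ℕ} (hj : j ≤ x.length) (M B : List α) :
    (x.take j ++ M ++ B).length = j + M.length + B.length := by
  simp
  omega

end seg

section split
variable {v : ℕ} {x : List ℕ} {j : ℕ}

lemma split_length (hj : j < x.length) : (splitBlock v x j).length = x.length + 1 := by
  rw [splitBlock, seg_length (by omega)]
  simp
  omega

lemma split_getD_lt (hj : j < x.length) {k : ℕ} (hk : k < j) :
    (splitBlock v x j).getD k 0 = x.getD k 0 :=
  getD_seg_lt (by omega) _ _ hk 0

lemma split_getD_j (hj : j < x.length) : (splitBlock v x j).getD j 0 = v := by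
  rw [splitBlock, getD_seg_right (by omega) _ _ (le_refl j)]
  simp

lemma split_getD_j1 (hj : j < x.length) :
    (splitBlock v x j).getD (j+1) 0 = x.getD j 0 - v := by
  rw [splitBlock, getD_seg_right (by omega) _ _ (by omega)]
  have : j + 1 - j = 1 := by omega
  rw [this]
  simp

lemma split_getD_ge (hj : j < x.length) {k : ℕ} (hk : j + 2 ≤ k) :
    (splitBlock v x j).getD k 0 = x.getD (k-1) 0 := by
  rw [splitBlock, getD_seg_right (by omega) _ _ (by omega)]
  rw [List.getD_append_right _ _ _ _ (by simp; omega)]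
  simp only [List.length_cons, List.length_singleton, List.length_nil]
  rw [getD_drop']
  congr 1
  simp
  omega

end split

section merge
variable {x : List ℕ} {j : ℕ}

lemma merge_length (hj : j + 1 < x.length) : (mergeBlock x j).length = x.length - 1 := by
  rw [mergeBlock, seg_length (by omega)]
  simp
  omega

lemma merge_getD_lt (hj : j + 1 < x.length) {k : ℕ} (hk : k < j) :
    (mergeBlock x j).getD k 0 = x.getD k 0 :=
  getD_seg_lt (by omega) _ _ hk 0

lemma merge_getD_j (hj : j + 1 < x.length) :
    (mergeBlock x j).getD j 0 = x.getD j 0 + x.getD (j+1) 0 := by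
  rw [mergeBlock, getD_seg_right (by omega) _ _ (le_refl j)]
  simp

lemma merge_getD_ge (hj : j + 1 < x.length) {k : ℕ} (hk : j + 1 ≤ k) :
    (mergeBlock x j).getD k 0 = x.getD (k+1) 0 := by
  rw [mergeBlock, getD_seg_right (by omega) _ _ (by omega)]
  rw [List.getD_append_right _ _ _ _ (by simp; omega)]
  simp only [List.length_singleton]
  rw [getD_drop']
  congr 1
  omega


end merge


lemma merge_split {v : ℕ} {x : List ℕ} {j : ℕ} (hj : j < x.length) (hv : v ≤ x.getD j 0) :
    mergeBlock (splitBlock v x j) j = x := by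
  have hsb : splitBlock v x j = (x.take j ++ [v, x.getD j 0 - v]) ++ x.drop (j+1) := rfl
  have htake : (splitBlock v x j).take j = x.take j := by
    rw [splitBlock, List.append_assoc, List.take_left' (by rw [List.length_take]; omega)]
  have hdrop : (splitBlock v x j).drop (j+2) = x.drop (j+1) := by
    rw [hsb, List.drop_left' (by rw [List.length_append, List.length_take]; simp; omega)]
  rw [mergeBlock, htake, hdrop, split_getD_j hj, split_getD_j1 hj]
  have : v + (x.getD j 0 - v) = x.getD j 0 := by omega
  rw [this, List.getD_eq_getElem _ _ hj]
  conv_rhs => rw [← List.take_append_drop j x, List.drop_eq_getElem_cons hj]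
  rw [List.append_assoc]
  rfl

lemma split_merge {v : ℕ} {x : List ℕ} {i : ℕ} (hi : i + 1 < x.length)
    (hx : x.getD i 0 = v) : splitBlock v (mergeBlock x i) i = x := by
  have hxi1 : 0 ≤ x.getD (i+1) 0 := Nat.zero_le _
  have htake : (mergeBlock x i).take i = x.take i := by
    rw [mergeBlock, List.append_assoc, List.take_left' (by rw [List.length_take]; omega)]
  have hdrop : (mergeBlock x i).drop (i+1) = x.drop (i+2) := by
    rw [mergeBlock]
    rw [show x.take i ++ [x.getD i 0 + x.getD (i+1) 0] ++ x.drop (i+2)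
        = (x.take i ++ [x.getD i 0 + x.getD (i+1) 0]) ++ x.drop (i+2) from by
          rw [List.append_assoc]]
    rw [List.drop_left' (by rw [List.length_append, List.length_take]; simp; omega)]
  rw [splitBlock, htake, hdrop, merge_getD_j hi]
  have : x.getD i 0 + x.getD (i+1) 0 - v = x.getD (i+1) 0 := by omega
  have hv' : v = x[i] := by rw [← hx, List.getD_eq_getElem _ _ (by omega : i < x.length)]
  rw [this, List.getD_eq_getElem _ _ hi, hv']
  conv_rhs => rw [← List.take_append_drop i x,
    List.drop_eq_getElem_cons (by omega : i < x.length), List.drop_eq_getElem_cons hi]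
  rw [List.append_assoc]
  rfl

lemma list_decomp {α : Type*} (P : List α) {j : ℕ} (hj : j < P.length) (d : α) :
    P = P.take j ++ [P.getD j d] ++ P.drop (j+1) := by
  rw [List.getD_eq_getElem _ _ hj]
  conv_lhs => rw [← List.take_append_drop j P, List.drop_eq_getElem_cons hj]
  rw [List.append_assoc]
  rfl

lemma split_witness {v : ℕ} {l : List ℕ} {x : List ℕ} {P : List (List ℕ)}
    (hne : ∀ p ∈ P, p ≠ []) (hPf : (P.flatten : Multiset ℕ) = (l : Multiset ℕ))
    (hPs : P.map List.sum = x) {j : ℕ} (hj : j < x.length)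
    (hv : v ∈ P.getD j []) (hlt : v < x.getD j 0) :
    ∃ P' : List (List ℕ), (∀ p ∈ P', p ≠ []) ∧
      ((P'.flatten : Multiset ℕ) = (l : Multiset ℕ)) ∧
      P'.map List.sum = splitBlock v x j ∧
      (∀ k < j, P'.getD k [] = P.getD k []) := by
  classical
  have hjP : j < P.length := by rw [← hPs] at hj; simpa using hj
  set Pj := P.getD j [] with hPj
  have hsumPj : Pj.sum = x.getD j 0 := by
    subst hPs
    rw [hPj, List.getD_eq_getElem _ _ hjP, List.getD_eq_getElem _ _ (by simpa using hjP),
      List.getElem_map]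
  have herase_sum : (Pj.erase v).sum = x.getD j 0 - v := by
    have := List.sum_erase hv
    omega
  refine ⟨P.take j ++ [[v], Pj.erase v] ++ P.drop (j+1), ?_, ?_, ?_, ?_⟩
  · intro p hp
    rcases List.mem_append.mp hp with hp | hp
    · rcases List.mem_append.mp hp with hp | hp
      · exact hne p (List.mem_of_mem_take hp)
      · have hp2 : p = [v] ∨ p = Pj.erase v := by simpa using hp
        rcases hp2 with rfl | rfl
        · simp
        · intro hnil
          rw [hnil] at herase_sum
          simp only [List.sum_nil] at herase_sum
          omega
    · exact hne p (List.mem_of_mem_drop hp)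
  · have hPdec : P = P.take j ++ [Pj] ++ P.drop (j+1) := list_decomp P hjP []
    have hflat : (P.take j ++ [[v], Pj.erase v] ++ P.drop (j+1)).flatten
        = (P.take j).flatten ++ (([v] ++ Pj.erase v) ++ (P.drop (j+1)).flatten) := by
      simp [List.flatten_append]
    have hflat2 : P.flatten = (P.take j).flatten ++ ((v :: Pj.erase v) ++ (P.drop (j+1)).flatten)
        → True := fun _ => trivial
    have hflat3 : P.flatten = (P.take j).flatten ++ (Pj ++ (P.drop (j+1)).flatten) := by
      conv_lhs => rw [hPdec]
      simp [List.flatten_append]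
    rw [hflat, ← hPf, hflat3, Multiset.coe_eq_coe]
    exact (((List.perm_cons_erase hv).symm.append_right _).append_left _)
  · rw [List.map_append, List.map_append, List.map_take, List.map_drop, hPs]
    rw [splitBlock]
    congr 1
    congr 1
    simp [herase_sum]
  · intro k hk
    exact getD_seg_lt (by omega) _ _ hk []

lemma merge_witness {l : List ℕ} {b : List ℕ} {Q : List (List ℕ)}
    (hne : ∀ p ∈ Q, p ≠ []) (hQf : (Q.flatten : Multiset ℕ) = (l : Multiset ℕ))
    (hQs : Q.map List.sum = b) {i : ℕ} (hi : i + 1 < b.length) :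
    ∃ Q' : List (List ℕ), (∀ p ∈ Q', p ≠ []) ∧
      ((Q'.flatten : Multiset ℕ) = (l : Multiset ℕ)) ∧
      Q'.map List.sum = mergeBlock b i ∧
      (∀ k < i, Q'.getD k [] = Q.getD k []) ∧
      Q'.getD i [] = Q.getD i [] ++ Q.getD (i+1) [] := by
  have hiQ : i + 1 < Q.length := by rw [← hQs] at hi; simpa using hi
  set Qi := Q.getD i [] with hQi
  set Qi1 := Q.getD (i+1) [] with hQi1
  have hsum_i : Qi.sum = b.getD i 0 := by
    subst hQs
    rw [hQi, List.getD_eq_getElem _ _ (by omega), List.getD_eq_getElem _ _ (by simp; omega),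
      List.getElem_map]
  have hsum_i1 : Qi1.sum = b.getD (i+1) 0 := by
    subst hQs
    rw [hQi1, List.getD_eq_getElem _ _ hiQ, List.getD_eq_getElem _ _ (by simpa using hiQ),
      List.getElem_map]
  have hQdec : Q = Q.take i ++ [Qi] ++ ([Qi1] ++ Q.drop (i+2)) := by
    have h1 : Q = Q.take i ++ [Qi] ++ Q.drop (i+1) := list_decomp Q (by omega) []
    have h2 : Q.drop (i+1) = Qi1 :: Q.drop (i+2) := by
      rw [hQi1, List.getD_eq_getElem _ _ hiQ]
      exact List.drop_eq_getElem_cons hiQ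
    rw [h2] at h1
    exact h1
  refine ⟨Q.take i ++ [Qi ++ Qi1] ++ Q.drop (i+2), ?_, ?_, ?_, ?_, ?_⟩
  · intro p hp
    rcases List.mem_append.mp hp with hp | hp
    · rcases List.mem_append.mp hp with hp | hp
      · exact hne p (List.mem_of_mem_take hp)
      · have hp2 : p = Qi ++ Qi1 := by simpa using hp
        subst hp2
        have : Qi ≠ [] := hne Qi (by
          rw [hQi, List.getD_eq_getElem _ _ (by omega : i < Q.length)]
          exact List.getElem_mem _)
        intro hnil
        exact this (List.append_eq_nil_iff.mp hnil).1
    · exact hne p (List.mem_of_mem_drop hp)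
  · have : (Q.take i ++ [Qi ++ Qi1] ++ Q.drop (i+2)).flatten = Q.flatten := by
      conv_rhs => rw [hQdec]
      simp [List.flatten_append]
    rw [this, hQf]
  · rw [List.map_append, List.map_append, List.map_take, List.map_drop, hQs, mergeBlock]
    congr 1
    congr 1
    simp [hsum_i, hsum_i1]
  · intro k hk
    exact getD_seg_lt (by omega) _ _ hk []
  · rw [getD_seg_right (by omega : i ≤ Q.length) _ _ (le_refl i), Nat.sub_self]
    rfl

lemma run_le_flatten' : ∀ (P : List (List ℕ)) (k : ℕ), k < P.length →
    ((P.getD k [] : List ℕ) : Multiset ℕ) ≤ (P.flatten : Multiset ℕ) := by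
  intro P
  induction P with
  | nil => intro k hk; simp at hk
  | cons p P ih =>
    intro k hk
    cases k with
    | zero =>
      show ((p : Multiset ℕ)) ≤ ((p ++ P.flatten : List ℕ) : Multiset ℕ)
      rw [← Multiset.coe_add]
      exact Multiset.le_add_right _ _
    | succ k =>
      have h1 : (p :: P).getD (k+1) [] = P.getD k [] := rfl
      have h2 : (p :: P).flatten = p ++ P.flatten := rfl
      rw [h1, h2, ← Multiset.coe_add]
      exact le_trans (ih k (by simpa using hk)) (Multiset.le_add_left _ _)

lemma run_le_flatten {P : List (List ℕ)} {k : ℕ} (hk : k < P.length) :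
    ((P.getD k [] : List ℕ) : Multiset ℕ) ≤ (P.flatten : Multiset ℕ) :=
  run_le_flatten' P k hk

lemma run_sum {P : List (List ℕ)} {x : List ℕ} (hPs : P.map List.sum = x) {k : ℕ}
    (hk : k < P.length) : (P.getD k []).sum = x.getD k 0 := by
  subst hPs
  rw [List.getD_eq_getElem _ _ hk, List.getD_eq_getElem _ _ (by simpa using hk),
    List.getElem_map]


lemma flatten_map_singleton (L : List ℕ) : (L.map (fun t => [t])).flatten = L := by
  induction L with
  | nil => rfl
  | cons a L ih => simp [ih]

section Main

variable {v : ℕ} {l : List ℕ}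
  (hpos : ∀ a ∈ l, 0 < a) (hlen : 2 ≤ l.length) (hhead : l.getD 0 0 = v)
  (hind : IsIndepAt l 0)

include hpos hlen hhead in
lemma v_pos : 0 < v := by
  have h0 : 0 < l.length := by omega
  have : l.getD 0 0 ∈ l := by
    rw [List.getD_eq_getElem _ _ h0]; exact List.getElem_mem h0
  rw [hhead] at this
  exact hpos v this

include hpos hlen hhead hind in
lemma indep_multiset (A B : Multiset ℕ) (hAB : A + B ≤ (l : Multiset ℕ))
    (hvA : v ∈ A) (hsum : A.sum = B.sum) : v ∈ B := by
  classical
  set f : ℕ → ℕ := fun i => l.getD i 0 with hf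
  have hvpos : 0 < v := v_pos hpos hlen hhead
  have hBne : B ≠ 0 := by
    intro h
    rw [h, Multiset.sum_zero] at hsum
    have : v ≤ A.sum := Multiset.single_le_sum (fun x _ => Nat.zero_le x) v hvA
    omega
  have h0len : 0 < l.length := by omega
  -- realize A with 0 ∈ I
  have h0S : ∀ i ∈ ({0} : Finset ℕ), i < l.length := by
    intro i hi; rw [Finset.mem_singleton] at hi; omega
  have h0val : ({0} : Finset ℕ).val.map f = {v} := by
    have : f 0 = v := hhead
    simp [this]
  obtain ⟨I', hI'disj, hI'len, hI'val⟩ := exists_realization l (A.erase v) {0} h0S (by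
    rw [h0val]
    have : A.erase v + {v} = A := by
      rw [add_comm, Multiset.singleton_add, Multiset.cons_erase hvA]
    rw [this]
    exact le_trans (Multiset.le_add_right A B) hAB)
  have h0I' : (0:ℕ) ∉ I' := fun h => (Finset.disjoint_left.mp hI'disj h) (Finset.mem_singleton_self 0)
  set I : Finset ℕ := insert 0 I' with hI
  have hIval : I.val.map f = A := by
    rw [hI, Finset.insert_val_of_notMem h0I', Multiset.map_cons, hI'val]
    have : f 0 = v := hhead
    rw [this]
    exact Multiset.cons_erase hvA
  have hIlen : ∀ i ∈ I, i < l.length := by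
    intro i hi
    rcases Finset.mem_insert.mp hi with rfl | hi
    · exact h0len
    · exact hI'len i hi
  obtain ⟨J, hJdisj, hJlen, hJval⟩ := exists_realization l B I hIlen (by
    rw [hIval, add_comm]; exact hAB)
  have hJne : J.Nonempty := by
    rw [Finset.nonempty_iff_ne_empty]
    rintro rfl
    simp at hJval
    exact hBne hJval.symm
  have hsums : (I.sum f) = (J.sum f) := by
    rw [Finset.sum_eq_multiset_sum, Finset.sum_eq_multiset_sum, hIval, hJval, hsum]
  obtain ⟨q, hqJ, hq⟩ := hind I J ⟨0, Finset.mem_insert_self 0 I'⟩ hJne hJdisj.symm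
    (by intro a ha
        rcases Finset.mem_union.mp ha with h | h
        · exact hIlen a h
        · exact hJlen a h)
    (Finset.mem_insert_self 0 I') hsums
  rw [hhead] at hq
  rw [← hJval]
  exact Multiset.mem_map.mpr ⟨q, hqJ, hq⟩

include hpos in
lemma flatten_pos {P : List (List ℕ)} (hPf : (P.flatten : Multiset ℕ) = (l : Multiset ℕ)) :
    ∀ e ∈ P.flatten, 0 < e := by
  intro e he
  have : e ∈ (l : Multiset ℕ) := by rw [← hPf]; exact he
  exact hpos e this

include hpos in
lemma run_pos {P : List (List ℕ)} (hPf : (P.flatten : Multiset ℕ) = (l : Multiset ℕ))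
    (hne : ∀ p ∈ P, p ≠ []) {k : ℕ} (hk : k < P.length) : 0 < (P.getD k []).sum := by
  have hmem : P.getD k [] ∈ P := by
    rw [List.getD_eq_getElem _ _ hk]; exact List.getElem_mem hk
  have hnem : P.getD k [] ≠ [] := hne _ hmem
  obtain ⟨e, he⟩ := List.exists_mem_of_ne_nil _ hnem
  have hef : e ∈ P.flatten := List.mem_flatten.mpr ⟨_, hmem, he⟩
  have hepos : 0 < e := flatten_pos hpos hPf e hef
  calc 0 < e := hepos
    _ ≤ (P.getD k []).sum := List.single_le_sum (fun x _ => Nat.zero_le x) e he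

include hpos in
lemma block_pos {x : List ℕ} {P : List (List ℕ)}
    (hPf : (P.flatten : Multiset ℕ) = (l : Multiset ℕ)) (hne : ∀ p ∈ P, p ≠ [])
    (hPs : P.map List.sum = x) {k : ℕ} (hk : k < x.length) : 0 < x.getD k 0 := by
  have hkP : k < P.length := by rw [← hPs] at hk; simpa using hk
  have h1 : (P.getD k []).sum = x.getD k 0 := by
    subst hPs
    rw [List.getD_eq_getElem _ _ hkP, List.getD_eq_getElem _ _ (by simpa using hkP),
      List.getElem_map]
  rw [← h1]
  exact run_pos hpos hPf hne hkP

lemma pos_sum_nil {r : List ℕ} (hr : ∀ e ∈ r, 0 < e) (h : r.sum = 0) : r = [] := by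
  cases r with
  | nil => rfl
  | cons a r =>
    exfalso
    have := hr a (List.mem_cons_self (a := a) (l := r))
    simp [List.sum_cons] at h
    omega

include hpos hlen hhead hind in
lemma hascopy_wd {x : List ℕ} {P Q : List (List ℕ)}
    (hPf : (P.flatten : Multiset ℕ) = (l : Multiset ℕ)) (hPs : P.map List.sum = x)
    (hQf : (Q.flatten : Multiset ℕ) = (l : Multiset ℕ)) (hQs : Q.map List.sum = x)
    (k : ℕ) (hv : v ∈ P.getD k []) : v ∈ Q.getD k [] := by
  classical
  have hPlen : P.length = x.length := by rw [← hPs]; simp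
  have hQlen : Q.length = x.length := by rw [← hQs]; simp
  by_cases hk : k < P.length
  case neg =>
    rw [List.getD_eq_default _ _ (by omega)] at hv
    simp at hv
  have hkQ : k < Q.length := by omega
  set Pk : Multiset ℕ := ((P.getD k [] : List ℕ) : Multiset ℕ) with hPk
  set Qk : Multiset ℕ := ((Q.getD k [] : List ℕ) : Multiset ℕ) with hQk
  have hPkle : Pk ≤ (l : Multiset ℕ) := hPf ▸ run_le_flatten hk
  have hQkle : Qk ≤ (l : Multiset ℕ) := hQf ▸ run_le_flatten hkQ
  have hPsum : Pk.sum = x.getD k 0 := by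
    rw [hPk, Multiset.sum_coe]; exact run_sum hPs hk
  have hQsum : Qk.sum = x.getD k 0 := by
    rw [hQk, Multiset.sum_coe]; exact run_sum hQs hkQ
  by_cases hvQ : v ∈ Qk
  case pos => exact hvQ
  set A : Multiset ℕ := Pk - Qk with hA
  set B : Multiset ℕ := Qk - Pk with hB
  have hvP : v ∈ Pk := hv
  have hcntQ : Multiset.count v Qk = 0 := Multiset.count_eq_zero.mpr hvQ
  have hvA : v ∈ A := by
    rw [← Multiset.one_le_count_iff_mem, hA, Multiset.count_sub, hcntQ]
    have := Multiset.one_le_count_iff_mem.mpr hvP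
    omega
  have hABle : A + B ≤ (l : Multiset ℕ) := by
    rw [Multiset.le_iff_count]
    intro a
    have h1 := Multiset.le_iff_count.mp hPkle a
    have h2 := Multiset.le_iff_count.mp hQkle a
    rw [Multiset.count_add, hA, hB, Multiset.count_sub, Multiset.count_sub]
    omega
  have hAsum : A.sum = B.sum := by
    have e1 : A + (Pk ∩ Qk) = Pk := by
      rw [Multiset.ext]
      intro a
      rw [Multiset.count_add, hA, Multiset.count_sub, Multiset.count_inter]
      omega
    have e2 : B + (Pk ∩ Qk) = Qk := by
      rw [Multiset.ext]
      intro a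
      rw [Multiset.count_add, hB, Multiset.count_sub, Multiset.count_inter]
      omega
    have s1 : A.sum + (Pk ∩ Qk).sum = Pk.sum := by rw [← Multiset.sum_add, e1]
    have s2 : B.sum + (Pk ∩ Qk).sum = Qk.sum := by rw [← Multiset.sum_add, e2]
    omega
  have hvB : v ∈ B := indep_multiset hpos hlen hhead hind A B hABle hvA hAsum
  exact absurd (Multiset.mem_of_le (Multiset.sub_le_self _ _) hvB) hvQ


include hpos hlen hhead in
lemma v_mem : v ∈ (l : Multiset ℕ) := by
  have h0 : 0 < l.length := by omega
  have : l.getD 0 0 ∈ l := by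
    rw [List.getD_eq_getElem _ _ h0]; exact List.getElem_mem h0
  rw [hhead] at this
  exact this

include hpos hlen hhead hind in
lemma hascopy_iff {x : List ℕ} {P : List (List ℕ)} (hne : ∀ p ∈ P, p ≠ [])
    (hPf : (P.flatten : Multiset ℕ) = (l : Multiset ℕ)) (hPs : P.map List.sum = x) (k : ℕ) :
    HasCopy (l : Multiset ℕ) v x k ↔ v ∈ P.getD k [] :=
  ⟨fun h => h P hne hPf hPs,
   fun hv Q hQne hQf hQs => hascopy_wd hpos hlen hhead hind hPf hPs hQf hQs k hv⟩

include hpos hlen hhead hind in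
lemma run_eq_singleton {x : List ℕ} {P : List (List ℕ)} (hne : ∀ p ∈ P, p ≠ [])
    (hPf : (P.flatten : Multiset ℕ) = (l : Multiset ℕ)) (hPs : P.map List.sum = x)
    {k : ℕ} (hk : k < x.length) (hx : x.getD k 0 = v) : P.getD k [] = [v] := by
  classical
  have hkP : k < P.length := by rw [← hPs] at hk; simpa using hk
  set M := P.getD k [] with hM
  have hMsum : M.sum = v := by rw [hM, run_sum hPs hkP, hx]
  have hMle : (M : Multiset ℕ) ≤ (l : Multiset ℕ) := hPf ▸ run_le_flatten' P k hkP
  have hMpos : ∀ e ∈ M, 0 < e := by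
    intro e he
    have hmem : M ∈ P := by
      rw [hM, List.getD_eq_getElem _ _ hkP]; exact List.getElem_mem hkP
    exact flatten_pos hpos hPf e (List.mem_flatten.mpr ⟨M, hmem, he⟩)
  have hvM : v ∈ M := by
    by_contra hvM
    have hle : ({v} : Multiset ℕ) + (M : Multiset ℕ) ≤ (l : Multiset ℕ) := by
      rw [Multiset.le_iff_count]
      intro a
      have h1 := Multiset.le_iff_count.mp hMle a
      have hvl : 1 ≤ Multiset.count v (l : Multiset ℕ) :=
        Multiset.one_le_count_iff_mem.mpr (v_mem hpos hlen hhead)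
      rw [Multiset.count_add, Multiset.count_singleton]
      by_cases hav : a = v
      · subst hav
        have hz : Multiset.count a (M : Multiset ℕ) = 0 :=
          Multiset.count_eq_zero.mpr (by exact_mod_cast hvM)
        rw [hz, if_pos rfl]
        omega
      · rw [if_neg hav]
        omega
    have := indep_multiset hpos hlen hhead hind {v} (M : Multiset ℕ) hle
      (Multiset.mem_singleton_self v) (by simp [hMsum])
    exact hvM (by exact_mod_cast this)
  obtain ⟨s, t, hst⟩ := List.append_of_mem hvM
  have hssum : s.sum = 0 ∧ t.sum = 0 := by
    have : s.sum + (v + t.sum) = v := by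
      rw [← List.sum_cons, ← List.sum_append, ← hst, hMsum]
    omega
  have hs : s = [] := pos_sum_nil (fun e he => hMpos e (by rw [hst]; simp [he])) hssum.1
  have ht : t = [] := pos_sum_nil (fun e he => hMpos e (by rw [hst]; simp [he])) hssum.2
  have hfin : M = [v] := by rw [hst, hs, ht]; rfl
  rw [hM] at hfin
  exact hfin

variable (htriv : ∃ i : ℕ, 1 ≤ i ∧ i < l.length ∧ l.getD i 0 = v)

include hpos hlen hhead htriv in
lemma count2 : 2 ≤ Multiset.count v (l : Multiset ℕ) := by
  obtain ⟨i, hi1, hil, hiv⟩ := htriv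
  have hsplit : (l : Multiset ℕ) = ((l.take i : List ℕ) : Multiset ℕ) + ((l.drop i : List ℕ) : Multiset ℕ) := by
    rw [Multiset.coe_add, List.take_append_drop]
  have h1 : v ∈ l.take i := by
    have h0 : 0 < (l.take i).length := by rw [List.length_take]; omega
    have : (l.take i)[0] = l[0]'(by omega) := by
      simp
    rw [List.mem_iff_getElem]
    refine ⟨0, h0, ?_⟩
    rw [this, ← List.getD_eq_getElem l 0 (by omega : 0 < l.length), hhead]
  have h2 : v ∈ l.drop i := by
    have h0 : 0 < (l.drop i).length := by rw [List.length_drop]; omega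
    rw [List.mem_iff_getElem]
    refine ⟨0, h0, ?_⟩
    have : (l.drop i)[0] = l[i]'(by omega) := by simp
    rw [this, ← List.getD_eq_getElem l 0 hil, hiv]
  rw [hsplit, Multiset.count_add]
  have c1 : 1 ≤ Multiset.count v ((l.take i : List ℕ) : Multiset ℕ) :=
    Multiset.one_le_count_iff_mem.mpr (by exact_mod_cast h1)
  have c2 : 1 ≤ Multiset.count v ((l.drop i : List ℕ) : Multiset ℕ) :=
    Multiset.one_le_count_iff_mem.mpr (by exact_mod_cast h2)
  omega

-- sInf wrappers for iotaFn and gammaFn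
lemma iota_le {x : List ℕ} {k : ℕ} (h : x.getD k 0 = v) : iotaFn v x ≤ (k : ℕ∞) :=
  sInfS_le h

lemma iota_spec {x : List ℕ} (h : iotaFn v x < ⊤) :
    ∃ n : ℕ, iotaFn v x = (n : ℕ∞) ∧ x.getD n 0 = v ∧ ∀ m < n, x.getD m 0 ≠ v :=
  sInfS_lt_top h

lemma gamma_le {x : List ℕ} {k : ℕ} (h1 : v < x.getD k 0)
    (h2 : HasCopy (l : Multiset ℕ) v x k) : gammaFn (l : Multiset ℕ) v x ≤ (k : ℕ∞) :=
  sInfS_le ⟨h1, h2⟩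

lemma gamma_spec {x : List ℕ} (h : gammaFn (l : Multiset ℕ) v x < ⊤) :
    ∃ n : ℕ, gammaFn (l : Multiset ℕ) v x = (n : ℕ∞) ∧
      (v < x.getD n 0 ∧ HasCopy (l : Multiset ℕ) v x n) ∧
      ∀ m < n, ¬ (v < x.getD m 0 ∧ HasCopy (l : Multiset ℕ) v x m) :=
  sInfS_lt_top (p := fun k => v < x.getD k 0 ∧ HasCopy (l : Multiset ℕ) v x k) h

include hpos hlen hhead hind in
lemma not_both_top {a : List ℕ} (ha : a ∈ Dset (l : Multiset ℕ)) :
    ¬ (iotaFn v a = ⊤ ∧ gammaFn (l : Multiset ℕ) v a = ⊤) := by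
  rintro ⟨hiota, hgamma⟩
  obtain ⟨P, hne, hPf, hPs⟩ := mem_Dset_iff.mp ha
  have hvfl : v ∈ P.flatten := by
    have : v ∈ (P.flatten : Multiset ℕ) := by rw [hPf]; exact v_mem hpos hlen hhead
    exact_mod_cast this
  obtain ⟨p, hpP, hvp⟩ := List.mem_flatten.mp hvfl
  obtain ⟨k, hk, rfl⟩ := List.mem_iff_getElem.mp hpP
  have hvgetD : v ∈ P.getD k [] := by rw [List.getD_eq_getElem _ _ hk]; exact hvp
  have hsum : (P.getD k []).sum = a.getD k 0 := run_sum hPs hk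
  have hvle : v ≤ a.getD k 0 := by
    rw [← hsum]
    exact List.single_le_sum (fun e _ => Nat.zero_le e) v hvgetD
  rcases eq_or_lt_of_le hvle with heq | hlt
  · have := iota_le (v := v) heq.symm
    rw [hiota] at this
    simp at this
  · have hcopy : HasCopy (l : Multiset ℕ) v a k :=
      (hascopy_iff hpos hlen hhead hind hne hPf hPs k).mpr hvgetD
    have := gamma_le hlt hcopy
    rw [hgamma] at this
    simp at this

include hpos hlen hhead hind in
lemma dichotomy {a : List ℕ} (ha : a ∈ Dset (l : Multiset ℕ)) :
    gammaFn (l : Multiset ℕ) v a < iotaFn v a ∨ iotaFn v a < gammaFn (l : Multiset ℕ) v a := by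
  rcases lt_trichotomy (gammaFn (l : Multiset ℕ) v a) (iotaFn v a) with h | h | h
  · exact Or.inl h
  · exfalso
    by_cases htop : iotaFn v a = ⊤
    · exact not_both_top hpos hlen hhead hind ha ⟨htop, h.trans htop⟩
    · obtain ⟨n, hn, hnv, _⟩ := iota_spec (lt_top_iff_ne_top.mpr htop)
      obtain ⟨m, hm, ⟨hmv, _⟩, _⟩ := gamma_spec (l := l) (x := a)
        (by rw [h, hn]; exact WithTop.coe_lt_top n)
      rw [h, hn] at hm
      have : m = n := by exact_mod_cast hm.symm
      subst this
      rw [hnv] at hmv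
      exact lt_irrefl v hmv
  · exact Or.inr h

include hpos hlen hhead hind in
lemma pair_props {a : List ℕ} (ha : a ∈ Dset (l : Multiset ℕ))
    (hlt : gammaFn (l : Multiset ℕ) v a < iotaFn v a) :
    ∃ g : ℕ, gammaFn (l : Multiset ℕ) v a = (g : ℕ∞) ∧
      splitBlock v a g ∈ Dset (l : Multiset ℕ) ∧
      iotaFn v (splitBlock v a g) = (g : ℕ∞) ∧
      iotaFn v (splitBlock v a g) < gammaFn (l : Multiset ℕ) v (splitBlock v a g) ∧
      Refines a (splitBlock v a g) ∧ g < a.length ∧ v < a.getD g 0 := by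
  classical
  have hgtop : gammaFn (l : Multiset ℕ) v a < ⊤ := lt_of_lt_of_le hlt le_top
  obtain ⟨g, hg, ⟨hglt, hgcopy⟩, hgmin⟩ := gamma_spec (l := l) (x := a) hgtop
  have hga : g < a.length := by
    by_contra hga
    rw [List.getD_eq_default _ _ (by omega)] at hglt
    omega
  have hiota_min : ∀ k ≤ g, a.getD k 0 ≠ v := by
    intro k hk hkv
    have h1 : iotaFn v a ≤ (k : ℕ∞) := iota_le hkv
    have h2 : (k : ℕ∞) ≤ (g : ℕ∞) := by exact_mod_cast hk
    rw [hg] at hlt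
    exact absurd (lt_of_le_of_lt (h1.trans h2) hlt) (lt_irrefl _)
  obtain ⟨P, hne, hPf, hPs⟩ := mem_Dset_iff.mp ha
  have hvP : v ∈ P.getD g [] := hgcopy P hne hPf hPs
  obtain ⟨P', hne', hP'f, hP's, hP'lt⟩ := split_witness hne hPf hPs hga hvP hglt
  set b := splitBlock v a g with hb
  have hbD : b ∈ Dset (l : Multiset ℕ) := mem_Dset_iff.mpr ⟨P', hne', hP'f, hP's⟩
  have hbg : b.getD g 0 = v := split_getD_j hga
  have hblt : ∀ k < g, b.getD k 0 = a.getD k 0 := fun k hk => split_getD_lt hga hk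
  have hbiota : iotaFn v b = (g : ℕ∞) := by
    have h1 : iotaFn v b ≤ (g : ℕ∞) := iota_le hbg
    obtain ⟨n, hn, hnv, hnmin⟩ := iota_spec (lt_of_le_of_lt h1 (WithTop.coe_lt_top g))
    have hng : n ≤ g := by rw [hn] at h1; exact_mod_cast h1
    rcases eq_or_lt_of_le hng with rfl | hng'
    · exact hn
    · exfalso
      rw [hblt n hng'] at hnv
      exact hiota_min n (le_of_lt hng') hnv
  refine ⟨g, hg, hbD, hbiota, ?_, ?_, hga, hglt⟩
  · rw [hbiota]
    by_contra hcon
    push_neg at hcon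
    obtain ⟨m, hm, ⟨hmv, hmcopy⟩, _⟩ := gamma_spec (l := l) (x := b)
      (lt_of_le_of_lt hcon (WithTop.coe_lt_top g))
    have hmg : m ≤ g := by rw [hm] at hcon; exact_mod_cast hcon
    rcases eq_or_lt_of_le hmg with rfl | hmg'
    · rw [hbg] at hmv; exact lt_irrefl v hmv
    · -- transfer HasCopy b m to HasCopy a m
      have hvP'm : v ∈ P'.getD m [] := hmcopy P' hne' hP'f hP's
      have : v ∈ P.getD m [] := by rw [← hP'lt m hmg']; exact hvP'm
      have hcopy_a : HasCopy (l : Multiset ℕ) v a m :=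
        (hascopy_iff hpos hlen hhead hind hne hPf hPs m).mpr this
      rw [hblt m hmg'] at hmv
      exact hgmin m hmg' ⟨hmv, hcopy_a⟩
  · -- Refines a b
    refine ⟨(a.take g).map (fun t => [t]) ++ [[v, a.getD g 0 - v]] ++ (a.drop (g+1)).map (fun t => [t]), ?_, ?_, ?_⟩
    · intro p hp
      rcases List.mem_append.mp hp with hp | hp
      · rcases List.mem_append.mp hp with hp | hp
        · obtain ⟨t, _, rfl⟩ := List.mem_map.mp hp
          simp
        · have : p = [v, a.getD g 0 - v] := by simpa using hp
          subst this
          simp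
      · obtain ⟨t, _, rfl⟩ := List.mem_map.mp hp
        simp
    · rw [List.flatten_append, List.flatten_append, flatten_map_singleton,
        flatten_map_singleton]
      have hmid : ([[v, a.getD g 0 - v]] : List (List ℕ)).flatten = [v, a.getD g 0 - v] := by
        simp
      rw [hmid]
      rfl
    · rw [List.map_append, List.map_append, List.map_map, List.map_map]
      have h1 : (List.sum ∘ fun t => [t]) = (id : ℕ → ℕ) := by
        funext t; simp
      rw [h1, List.map_id, List.map_id]
      have h2 : List.map List.sum [[v, a.getD g 0 - v]] = [a.getD g 0] := by
        simp only [List.map_cons, List.map_nil, List.sum_cons, List.sum_nil]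
        congr 1
        omega
      rw [h2]
      exact (list_decomp a hga 0).symm

include hpos hlen hhead hind htriv in
lemma surj_props {b : List ℕ} (hb : b ∈ Dset (l : Multiset ℕ))
    (hlt : iotaFn v b < gammaFn (l : Multiset ℕ) v b) :
    ∃ a : List ℕ, a ∈ Dset (l : Multiset ℕ) ∧
      gammaFn (l : Multiset ℕ) v a < iotaFn v a ∧
      gammaFn (l : Multiset ℕ) v a = iotaFn v b ∧
      splitBlock v a (gammaFn (l : Multiset ℕ) v a).toNat = b := by
  classical
  have hvpos : 0 < v := v_pos hpos hlen hhead
  have hitop : iotaFn v b < ⊤ := lt_of_lt_of_le hlt le_top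
  obtain ⟨i, hi, hiv, himin⟩ := iota_spec hitop
  have hib : i < b.length := by
    by_contra hcon
    rw [List.getD_eq_default _ _ (by omega)] at hiv
    omega
  have hgmin : ∀ m ≤ i, ¬ (v < b.getD m 0 ∧ HasCopy (l : Multiset ℕ) v b m) := by
    intro m hm hcon
    have h1 : gammaFn (l : Multiset ℕ) v b ≤ (m : ℕ∞) := gamma_le hcon.1 hcon.2
    have h2 : (m : ℕ∞) ≤ (i : ℕ∞) := by exact_mod_cast hm
    rw [hi] at hlt
    exact absurd (lt_of_le_of_lt (h1.trans h2) hlt) (lt_irrefl _)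
  obtain ⟨Q, hQne, hQf, hQs⟩ := mem_Dset_iff.mp hb
  have hQlen : Q.length = b.length := by rw [← hQs]; simp
  have hQi : Q.getD i [] = [v] := run_eq_singleton hpos hlen hhead hind hQne hQf hQs hib hiv
  -- i + 1 < b.length
  have hi1 : i + 1 < b.length := by
    by_contra hcon
    have hlen_eq : b.length = i + 1 := by omega
    have hQdec : Q = Q.take i ++ [[v]] ++ Q.drop (i+1) := by
      rw [← hQi]; exact list_decomp Q (by omega) []
    have hcount : 2 ≤ Multiset.count v (Q.flatten : Multiset ℕ) := by
      rw [hQf]; exact count2 hpos hlen hhead htriv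
    have hdropnil : Q.drop (i+1) = [] := by
      rw [List.drop_eq_nil_iff]
      omega
    have hflat : Q.flatten = (Q.take i).flatten ++ [v] := by
      conv_lhs => rw [hQdec]
      rw [hdropnil]
      simp [List.flatten_append]
    rw [hflat] at hcount
    have : Multiset.count v (((Q.take i).flatten ++ [v] : List ℕ) : Multiset ℕ)
        = Multiset.count v ((Q.take i).flatten : Multiset ℕ) + 1 := by
      rw [← Multiset.coe_add, Multiset.count_add]
      simp
    rw [this] at hcount
    have hvtake : v ∈ (Q.take i).flatten := by
      have : 1 ≤ Multiset.count v ((Q.take i).flatten : Multiset ℕ) := by omega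
      exact_mod_cast Multiset.one_le_count_iff_mem.mp this
    obtain ⟨p, hpmem, hvp⟩ := List.mem_flatten.mp hvtake
    obtain ⟨m, hmlen, rfl⟩ := List.mem_iff_getElem.mp hpmem
    have hmi : m < i := by
      have := hmlen
      rw [List.length_take] at this
      omega
    have hmQ : m < Q.length := by omega
    have hgetm : (Q.take i)[m] = Q[m]'hmQ := by simp
    have hvQm : v ∈ Q.getD m [] := by
      rw [List.getD_eq_getElem _ _ hmQ, ← hgetm]; exact hvp
    have hsumm : (Q.getD m []).sum = b.getD m 0 := run_sum hQs hmQ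
    have hvle : v ≤ b.getD m 0 := by
      rw [← hsumm]; exact List.single_le_sum (fun e _ => Nat.zero_le e) v hvQm
    have hne_v : b.getD m 0 ≠ v := himin m hmi
    have hvlt : v < b.getD m 0 := lt_of_le_of_ne hvle (Ne.symm hne_v)
    have hcopy : HasCopy (l : Multiset ℕ) v b m :=
      (hascopy_iff hpos hlen hhead hind hQne hQf hQs m).mpr hvQm
    exact hgmin m (le_of_lt hmi) ⟨hvlt, hcopy⟩
  -- the preimage a
  obtain ⟨Q', hQ'ne, hQ'f, hQ's, hQ'lt, hQ'i⟩ := merge_witness hQne hQf hQs hi1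
  set a := mergeBlock b i with ha
  have haD : a ∈ Dset (l : Multiset ℕ) := mem_Dset_iff.mpr ⟨Q', hQ'ne, hQ'f, hQ's⟩
  have hbpos : 0 < b.getD (i+1) 0 := block_pos hpos hQf hQne hQs hi1
  have hai : a.getD i 0 = v + b.getD (i+1) 0 := by
    rw [ha, merge_getD_j hi1, hiv]
  have halt : ∀ k < i, a.getD k 0 = b.getD k 0 := fun k hk => merge_getD_lt hi1 hk
  have hvQ'i : v ∈ Q'.getD i [] := by
    rw [hQ'i, hQi]; simp
  have hcopy_a : HasCopy (l : Multiset ℕ) v a i :=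
    (hascopy_iff hpos hlen hhead hind hQ'ne hQ'f hQ's i).mpr hvQ'i
  have hvlt_a : v < a.getD i 0 := by rw [hai]; omega
  have hamin : ∀ m < i, ¬ (v < a.getD m 0 ∧ HasCopy (l : Multiset ℕ) v a m) := by
    intro m hm ⟨h1, h2⟩
    have hvQ'm : v ∈ Q'.getD m [] := h2 Q' hQ'ne hQ'f hQ's
    have hvQm : v ∈ Q.getD m [] := by rw [← hQ'lt m hm]; exact hvQ'm
    have hcopy_b : HasCopy (l : Multiset ℕ) v b m :=
      (hascopy_iff hpos hlen hhead hind hQne hQf hQs m).mpr hvQm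
    rw [halt m hm] at h1
    exact hgmin m (le_of_lt hm) ⟨h1, hcopy_b⟩
  have hgamma_a : gammaFn (l : Multiset ℕ) v a = (i : ℕ∞) := by
    have h1 : gammaFn (l : Multiset ℕ) v a ≤ (i : ℕ∞) :=
      gamma_le hvlt_a hcopy_a
    obtain ⟨n, hn, ⟨hnv, hncopy⟩, _⟩ := gamma_spec (l := l) (x := a)
      (lt_of_le_of_lt h1 (WithTop.coe_lt_top i))
    have hni : n ≤ i := by rw [hn] at h1; exact_mod_cast h1
    rcases eq_or_lt_of_le hni with rfl | hni'
    · exact hn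
    · exact absurd ⟨hnv, hncopy⟩ (hamin n hni')
  have hiota_a : gammaFn (l : Multiset ℕ) v a < iotaFn v a := by
    rw [hgamma_a]
    by_contra hcon
    push_neg at hcon
    obtain ⟨n, hn, hnv, _⟩ := iota_spec (lt_of_le_of_lt hcon (WithTop.coe_lt_top i))
    have hni : n ≤ i := by rw [hn] at hcon; exact_mod_cast hcon
    rcases eq_or_lt_of_le hni with rfl | hni'
    · rw [hai] at hnv; omega
    · rw [halt n hni'] at hnv
      exact himin n hni' hnv
  refine ⟨a, haD, hiota_a, by rw [hgamma_a, hi], ?_⟩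
  have htn : (gammaFn (l : Multiset ℕ) v a).toNat = i := by rw [hgamma_a]; rfl
  rw [htn, ha]
  exact split_merge hi1 hiv

end Main

/-- for λ with an independent block v = π₁ satisfying a trivial resonance
π₁ = π_i, the matching pairing each composition a with γ(a) < ι(a) to the composition
obtained by splitting the block at position γ(a) into v and the remainder is a complete
matching on D_λ. -/
theorem complete_matching_on_Dlam (v : ℕ) (l : List ℕ)
    (hpos : ∀ a ∈ l, 0 < a) (hlen : 2 ≤ l.length) (hhead : l.getD 0 0 = v)
    (hind : IsIndepAt l 0)
    (htriv : ∃ i : ℕ, 1 ≤ i ∧ i < l.length ∧ l.getD i 0 = v) :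
    (∀ a ∈ Dset (l : Multiset ℕ),
      gammaFn (l : Multiset ℕ) v a < iotaFn v a ∨
      iotaFn v a < gammaFn (l : Multiset ℕ) v a) ∧
    (∀ a ∈ Dset (l : Multiset ℕ), gammaFn (l : Multiset ℕ) v a < iotaFn v a →
      splitBlock v a (gammaFn (l : Multiset ℕ) v a).toNat ∈ Dset (l : Multiset ℕ) ∧
      iotaFn v (splitBlock v a (gammaFn (l : Multiset ℕ) v a).toNat) <
        gammaFn (l : Multiset ℕ) v (splitBlock v a (gammaFn (l : Multiset ℕ) v a).toNat) ∧
      Refines a (splitBlock v a (gammaFn (l : Multiset ℕ) v a).toNat)) ∧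
    Set.BijOn (fun a => splitBlock v a (gammaFn (l : Multiset ℕ) v a).toNat)
      {a | a ∈ Dset (l : Multiset ℕ) ∧ gammaFn (l : Multiset ℕ) v a < iotaFn v a}
      {b | b ∈ Dset (l : Multiset ℕ) ∧ iotaFn v b < gammaFn (l : Multiset ℕ) v b} := by
  refine ⟨fun a ha => dichotomy hpos hlen hhead hind ha, ?_, ?_, ?_, ?_⟩
  · intro a ha hlt
    obtain ⟨g, hg, h1, h2, h3, h4, _, _⟩ := pair_props hpos hlen hhead hind ha hlt
    have htn : (gammaFn (l : Multiset ℕ) v a).toNat = g := by rw [hg]; rfl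
    rw [htn]
    exact ⟨h1, h3, h4⟩
  · rintro a ⟨ha, hlt⟩
    obtain ⟨g, hg, h1, h2, h3, _, _, _⟩ := pair_props hpos hlen hhead hind ha hlt
    have htn : (gammaFn (l : Multiset ℕ) v a).toNat = g := by rw [hg]; rfl
    show splitBlock v a (gammaFn (l : Multiset ℕ) v a).toNat ∈ Dset (l : Multiset ℕ) ∧
      iotaFn v (splitBlock v a (gammaFn (l : Multiset ℕ) v a).toNat) <
        gammaFn (l : Multiset ℕ) v (splitBlock v a (gammaFn (l : Multiset ℕ) v a).toNat)
    rw [htn]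
    exact ⟨h1, h3⟩
  · rintro a1 ⟨ha1, hlt1⟩ a2 ⟨ha2, hlt2⟩ heq
    obtain ⟨g1, hg1, _, hbi1, _, _, hga1, hglt1⟩ := pair_props hpos hlen hhead hind ha1 hlt1
    obtain ⟨g2, hg2, _, hbi2, _, _, hga2, hglt2⟩ := pair_props hpos hlen hhead hind ha2 hlt2
    have ht1 : (gammaFn (l : Multiset ℕ) v a1).toNat = g1 := by rw [hg1]; rfl
    have ht2 : (gammaFn (l : Multiset ℕ) v a2).toNat = g2 := by rw [hg2]; rfl
    simp only [ht1, ht2] at heq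
    have hgg : g1 = g2 := by
      have h1 := hbi1
      have h2 := hbi2
      rw [heq] at h1
      rw [h1] at h2
      exact_mod_cast h2
    subst hgg
    have e1 : mergeBlock (splitBlock v a1 g1) g1 = a1 := merge_split hga1 (le_of_lt hglt1)
    have e2 : mergeBlock (splitBlock v a2 g1) g1 = a2 := merge_split hga2 (le_of_lt hglt2)
    rw [← e1, ← e2, heq]
  · rintro b ⟨hb, hlt⟩
    obtain ⟨a, haD, hgl, _, heq⟩ := surj_props hpos hlen hhead hind htriv hb hlt
    exact ⟨a, ⟨haD, hgl⟩, heq⟩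
end

section
/- Let λ = (k^{c₁·m₁-fold},…,k^{c_t·m_t-fold},1^{m_{t+1}}) be the number partition of n consisting of m₁ copies of k^{c₁}, …, m_t copies of k^{c_t}, and m_{t+1} copies of 1, with k ≥ 2, m₁ ≥ 2, and c₁ > c₂ > ⋯ > c_t ≥ 1. Then the pair (λ, k^{c₁}) satisfies the cutting condition. -/
theorem Multiset.exists_le_sum_eq_of_dvd_chain {T : ℕ} (hT : 0 < T) {A : Multiset ℕ}
    (hdvd : ∀ a ∈ A, a ∣ T) (hchain : ∀ a ∈ A, ∀ b ∈ A, a ∣ b ∨ b ∣ a) (hle : T ≤ A.sum) :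
    ∃ B ≤ A, B.sum = T := by
  induction A using Multiset.strongInductionOn generalizing T with
  | ih A ih =>
    have hA : A ≠ 0 := by rintro rfl; rw [Multiset.sum_zero] at hle; omega
    obtain ⟨a, haA, hmax⟩ := A.exists_max_image id hA
    have hpos : ∀ b ∈ A, 0 < b := fun b hb => Nat.pos_of_dvd_of_pos (hdvd b hb) hT
    have hdvd_max : ∀ b ∈ A, b ∣ a := by
      intro b hb
      rcases hchain a haA b hb with hab | hba
      · rw [le_antisymm (Nat.le_of_dvd (hpos b hb) hab) (hmax b hb)]
      · exact hba
    rcases (Nat.le_of_dvd hT (hdvd a haA)).eq_or_lt with rfl | haT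
    · exact ⟨{a}, Multiset.singleton_le.mpr haA, Multiset.sum_singleton a⟩
    have hsum : a + (A.erase a).sum = A.sum := Multiset.sum_erase haA
    obtain ⟨B, hB, hBsum⟩ := ih (A.erase a) (Multiset.erase_lt.mpr haA) (T := T - a)
      (by omega)
      (fun b hb => Nat.dvd_sub (hdvd b (Multiset.mem_of_mem_erase hb))
        (hdvd_max b (Multiset.mem_of_mem_erase hb)))
      (fun b hb b' hb' =>
        hchain b (Multiset.mem_of_mem_erase hb) b' (Multiset.mem_of_mem_erase hb'))
      (by omega)
    refine ⟨a ::ₘ B, (Multiset.cons_le_cons a hB).trans_eq (Multiset.cons_erase haA), ?_⟩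
    rw [Multiset.sum_cons, hBsum]
    omega

theorem Multiset.exists_le_sum_eq_pow {k c : ℕ} (hk : 0 < k) {A : Multiset ℕ}
    (hA : ∀ a ∈ A, ∃ e ≤ c, a = k ^ e) (hle : k ^ c ≤ A.sum) : ∃ B ≤ A, B.sum = k ^ c := by
  refine Multiset.exists_le_sum_eq_of_dvd_chain (pow_pos hk c) (fun a ha => ?_)
    (fun a ha b hb => ?_) hle
  · obtain ⟨e, he, rfl⟩ := hA a ha
    exact pow_dvd_pow k he
  · obtain ⟨e, -, rfl⟩ := hA a ha
    obtain ⟨f, -, rfl⟩ := hA b hb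
    exact (le_total e f).imp (pow_dvd_pow k) (pow_dvd_pow k)

namespace PartCoarsen

variable {mu lam : Multiset ℕ}

theorem exists_group {eta : ℕ} (h : PartCoarsen mu lam) (heta : eta ∈ mu) :
    ∃ p ≤ lam, p.sum = eta ∧ PartCoarsen (mu.erase eta) (lam - p) := by
  obtain ⟨P, hP0, rfl, rfl⟩ := h
  obtain ⟨p, hpP, rfl⟩ := Multiset.mem_map.mp heta
  have hP : P = p ::ₘ P.erase p := (Multiset.cons_erase hpP).symm
  refine ⟨p, ?_, rfl, P.erase p, fun q hq => hP0 q (Multiset.mem_of_mem_erase hq), ?_, ?_⟩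
  · rw [hP, Multiset.sum_cons]
    exact le_self_add
  · rw [hP, Multiset.sum_cons, add_tsub_cancel_left, Multiset.erase_cons_head]
  · rw [hP, Multiset.map_cons, Multiset.erase_cons_head, Multiset.erase_cons_head]

theorem cons {p : Multiset ℕ} (h : PartCoarsen mu lam) (hp : p ≠ 0) :
    PartCoarsen (p.sum ::ₘ mu) (p + lam) := by
  obtain ⟨P, hP0, rfl, rfl⟩ := h
  refine ⟨p ::ₘ P, ?_, Multiset.sum_cons p P, Multiset.map_cons _ p P⟩
  simpa [hp] using hP0

end PartCoarsen

theorem exists_pow_eq_of_mem_powers_partition {k t : ℕ} {c m : ℕ → ℕ} (hc : ∀ i, 1 < i → i ≤ t → c i < c 1)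
    {a : ℕ} (ha : a ∈ (Finset.Icc 1 t).sum (fun i => Multiset.replicate (m i) (k ^ c i)) +
      Multiset.replicate (m (t + 1)) 1) :
    ∃ e ≤ c 1, a = k ^ e := by
  rcases Multiset.mem_add.mp ha with ha | ha
  · obtain ⟨i, hi, hai⟩ := Multiset.mem_sum.mp ha
    obtain ⟨hi1, hit⟩ := Finset.mem_Icc.mp hi
    refine ⟨c i, ?_, Multiset.eq_of_mem_replicate hai⟩
    rcases hi1.eq_or_lt with rfl | hi1
    · exact le_rfl
    · exact (hc i hi1 hit).le
  · exact ⟨0, Nat.zero_le _, by rw [Multiset.eq_of_mem_replicate ha, pow_zero]⟩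

theorem cutting_condition_powers_general (k t : ℕ) (c m : ℕ → ℕ)
    (hk : 2 ≤ k) (ht : 1 ≤ t) (hm1 : 2 ≤ m 1)
    (hc : ∀ i j, 1 ≤ i → i < j → j ≤ t → c j < c i)
    (lam : Multiset ℕ)
    (hlam : lam = (Finset.Icc 1 t).sum (fun i => Multiset.replicate (m i) (k ^ c i)) +
      Multiset.replicate (m (t + 1)) 1) :
    CuttingCondition lam (k ^ c 1) := by
  have hpow : ∀ a ∈ lam, ∃ e ≤ c 1, a = k ^ e := fun a ha =>
    exists_pow_eq_of_mem_powers_partition (fun i hi hit => hc 1 i le_rfl hi hit) (hlam ▸ ha)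
  have hpos : ∀ a ∈ lam, 0 < a := fun a ha => by
    obtain ⟨e, -, rfl⟩ := hpow a ha
    positivity
  refine ⟨?_, ?_⟩
  · rw [hlam, Multiset.mem_add, Multiset.mem_sum]
    exact Or.inl ⟨1, Finset.mem_Icc.mpr ⟨le_rfl, ht⟩, Multiset.mem_replicate.mpr ⟨by omega, rfl⟩⟩
  rintro mu _ I hmu heta hI hIle rfl
  obtain ⟨p, hp, hpsum, hrest⟩ := hmu.exists_group heta
  obtain ⟨B, hB, hBsum⟩ := Multiset.exists_le_sum_eq_pow (by omega : 0 < k)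
    (fun a ha => hpow a (Multiset.mem_of_le hp ha)) (hpsum ▸ le_self_add)
  have hrestsum : (p - B).sum = I.sum := by
    have := Multiset.sum_add B (p - B)
    rw [add_tsub_cancel_of_le hB, hpsum, hBsum] at this
    omega
  have hIpos : 0 < I.sum := by
    obtain ⟨a, haI⟩ := Multiset.exists_mem_of_ne_zero hI
    exact lt_of_lt_of_le (hpos a (Multiset.mem_of_le (hIle.trans (Multiset.erase_le _ _)) haI))
      (Multiset.le_sum_of_mem haI)
  have hne : ∀ q : Multiset ℕ, 0 < q.sum → q ≠ 0 := fun q hq =>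
    ne_of_apply_ne Multiset.sum (by rw [Multiset.sum_zero]; exact hq.ne')
  have hsplit := (hrest.cons (hne (p - B) (hrestsum ▸ hIpos))).cons
    (hne B (hBsum ▸ pow_pos (by omega) _))
  rwa [hBsum, hrestsum, ← add_assoc, add_tsub_cancel_of_le hB, add_tsub_cancel_of_le hp] at hsplit

/-- for λ consisting of m_i copies of k^{c_i} (i = 1,…,t, with
c_1 > ⋯ > c_t ≥ 1, k ≥ 2, m_1 ≥ 2) and m_{t+1} copies of 1, the pair (λ, k^{c_1})
satisfies the cutting condition. -/
theorem cutting_condition_powers (k t : ℕ) (c m : ℕ → ℕ)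
    (hk : 2 ≤ k) (ht : 1 ≤ t) (hm1 : 2 ≤ m 1)
    (hm : ∀ i, 1 ≤ i → i ≤ t + 1 → 1 ≤ m i)
    (hc : ∀ i j, 1 ≤ i → i < j → j ≤ t → c j < c i) (hct : 1 ≤ c t)
    (lam : Multiset ℕ)
    (hlam : lam = (Finset.Icc 1 t).sum (fun i => Multiset.replicate (m i) (k ^ c i)) +
      Multiset.replicate (m (t + 1)) 1) :
    CuttingCondition lam (k ^ c 1) :=
  cutting_condition_powers_general k t c m hk ht hm1 hc lam hlam
end

section
/- Let λ = (π^p, π₁^{q₁},…,π_m^{q_m}, 1^r) be a number partition with p ≥ 1 copies of π, q_i copies of π_i, and r copies of 1, satisfying π ≥ Σ_{i=1}^m q_i π_i. Then the pair (λ, π) satisfies the cutting condition. -/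
/-- for λ = (π^p, π₁^{q₁},…,π_m^{q_m}, 1^r) with p ≥ 1 and
π ≥ Σ q_i π_i, the pair (λ, π) satisfies the cutting condition. -/
theorem cutting_condition_dominant (p m r pb : ℕ) (pi q : ℕ → ℕ)
    (hp : 1 ≤ p) (hpb : 0 < pb)
    (hpi : ∀ i, 1 ≤ i → i ≤ m → 0 < pi i)
    (hsum : (Finset.Icc 1 m).sum (fun i => q i * pi i) ≤ pb)
    (lam : Multiset ℕ)
    (hlam : lam = Multiset.replicate p pb +
      (Finset.Icc 1 m).sum (fun i => Multiset.replicate (q i) (pi i)) +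
      Multiset.replicate r 1) :
    CuttingCondition lam pb := by

  classical
  have hpos : ∀ a ∈ lam, 0 < a := by
    intro a ha
    rw [hlam] at ha
    simp only [Multiset.mem_add] at ha
    rcases ha with (h | h) | h
    · rw [Multiset.eq_of_mem_replicate h]; exact hpb
    · rw [Multiset.mem_sum] at h
      obtain ⟨i, hi, hmem⟩ := h
      rw [Multiset.eq_of_mem_replicate hmem]
      exact hpi i (Finset.mem_Icc.mp hi).1 (Finset.mem_Icc.mp hi).2
    · rw [Multiset.eq_of_mem_replicate h]; omega
  have hmem_pb : pb ∈ lam := by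
    rw [hlam]
    refine Multiset.mem_add.mpr (Or.inl (Multiset.mem_add.mpr (Or.inl ?_)))
    exact Multiset.mem_replicate.mpr ⟨by omega, rfl⟩
  have key : ∀ B : Multiset ℕ, B ≤ lam → pb < B.sum → ∃ B1, B1 ≤ B ∧ B1.sum = pb := by
    intro B hB hBs
    by_cases hpbB : pb ∈ B
    · exact ⟨{pb}, Multiset.singleton_le.mpr hpbB, by simp⟩
    · set R := B.filter (fun x => x ≠ 1) with hR
      set O := B.filter (fun x => ¬ x ≠ 1) with hO
      have hBorder : R + O = B := Multiset.filter_add_not _ B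
      have hOones : O = Multiset.replicate (Multiset.card O) 1 := by
        apply Multiset.eq_replicate_card.mpr
        intro b hb
        have := Multiset.of_mem_filter hb
        simpa using this
      have hRQ : R = B.filter (fun x => x ≠ 1 ∧ x ≠ pb) := by
        rw [hR]
        apply Multiset.filter_congr
        intro x hx
        constructor
        · intro h1
          exact ⟨h1, fun hxe => hpbB (hxe ▸ hx)⟩
        · intro h; exact h.1
      have hT : R.sum ≤ pb := by
        have sum_mono : ∀ {s t : Multiset ℕ}, s ≤ t → s.sum ≤ t.sum := by
          intro s t h
          obtain ⟨u, rfl⟩ := Multiset.le_iff_exists_add.mp h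
          simp
        have h1 : R ≤ lam.filter (fun x => x ≠ 1 ∧ x ≠ pb) := by
          rw [hRQ]; exact Multiset.filter_le_filter _ hB
        have h2 : lam.filter (fun x => x ≠ 1 ∧ x ≠ pb) ≤
            (Finset.Icc 1 m).sum (fun i => Multiset.replicate (q i) (pi i)) := by
          rw [hlam, Multiset.filter_add, Multiset.filter_add]
          have e1 : (Multiset.replicate p pb).filter (fun x => x ≠ 1 ∧ x ≠ pb) = 0 := by
            rw [Multiset.filter_eq_nil]
            intro a ha
            rw [Multiset.eq_of_mem_replicate ha]
            simp
          have e2 : (Multiset.replicate r 1).filter (fun x => x ≠ 1 ∧ x ≠ pb) = 0 := by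
            rw [Multiset.filter_eq_nil]
            intro a ha
            rw [Multiset.eq_of_mem_replicate ha]
            simp
          rw [e1, e2, zero_add, add_zero]
          exact Multiset.filter_le _ _
        have h3 : ((Finset.Icc 1 m).sum (fun i => Multiset.replicate (q i) (pi i))).sum
            = (Finset.Icc 1 m).sum (fun i => q i * pi i) := by
          rw [Multiset.sum_sum]
          apply Finset.sum_congr rfl
          intro i _
          rw [Multiset.sum_replicate, smul_eq_mul]
        calc R.sum ≤ (lam.filter (fun x => x ≠ 1 ∧ x ≠ pb)).sum :=
              sum_mono h1
          _ ≤ ((Finset.Icc 1 m).sum (fun i => Multiset.replicate (q i) (pi i))).sum :=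
              sum_mono h2
          _ ≤ pb := by rw [h3]; exact hsum
      have hOsum : O.sum = Multiset.card O := by
        conv_lhs => rw [hOones]
        rw [Multiset.sum_replicate, smul_eq_mul, mul_one]
      have hBsum' : B.sum = R.sum + Multiset.card O := by
        rw [← hBorder, Multiset.sum_add, hOsum]
      have hk : pb - R.sum ≤ Multiset.card O := by omega
      refine ⟨R + Multiset.replicate (pb - R.sum) 1, ?_, ?_⟩
      · rw [← hBorder]
        apply add_le_add_right
        conv_rhs => rw [hOones]
        exact Multiset.replicate_le_replicate 1 |>.mpr hk
      · rw [Multiset.sum_add, Multiset.sum_replicate, smul_eq_mul, mul_one]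
        omega
  refine ⟨hmem_pb, ?_⟩
  intro mu eta I hco heta hI hIle hetaeq
  obtain ⟨P, hPne, hPsum, hPmap⟩ := hco
  rw [← hPmap] at heta
  obtain ⟨B, hBP, hBsum⟩ := Multiset.mem_map.mp heta
  have hIpos : 0 < I.sum := by
    obtain ⟨a, ha⟩ := Multiset.exists_mem_of_ne_zero hI
    have halam : a ∈ lam := Multiset.mem_of_le (le_trans hIle (Multiset.erase_le _ _)) ha
    have h1 := hpos a halam
    have h2 : a ≤ I.sum := Multiset.single_le_sum (fun x _ => Nat.zero_le x) a ha
    omega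
  have hBle : B ≤ lam := by
    rw [← hPsum]
    exact Multiset.single_le_sum (fun x _ => Multiset.zero_le x) B hBP
  have hBbig : pb < B.sum := by omega
  obtain ⟨B1, hB1le, hB1sum⟩ := key B hBle hBbig
  set B2 := B - B1 with hB2
  have hBsplit : B1 + B2 = B := add_tsub_cancel_of_le hB1le
  have hB2sum : B2.sum = I.sum := by
    have := congrArg Multiset.sum hBsplit
    rw [Multiset.sum_add] at this
    omega
  have hPdecomp : B ::ₘ P.erase B = P := Multiset.cons_erase hBP
  refine ⟨B1 ::ₘ B2 ::ₘ P.erase B, ?_, ?_, ?_⟩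
  · intro x hx
    rcases Multiset.mem_cons.mp hx with h | hx
    · subst h
      intro h0
      rw [h0] at hB1sum
      simp at hB1sum
      omega
    rcases Multiset.mem_cons.mp hx with h | hx
    · subst h
      intro h0
      rw [h0] at hB2sum
      simp at hB2sum
      omega
    · exact hPne x (Multiset.mem_of_le (Multiset.erase_le _ _) hx)
  · rw [Multiset.sum_cons, Multiset.sum_cons, ← add_assoc, hBsplit]
    rw [← Multiset.sum_cons, hPdecomp, hPsum]
  · have herase : mu.erase eta = (P.erase B).map Multiset.sum := by
      conv_lhs => rw [← hPmap, ← hPdecomp]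
      rw [Multiset.map_cons, hBsum, Multiset.erase_cons_head]
    rw [Multiset.map_cons, Multiset.map_cons, hB1sum, hB2sum, herase]
end

section
/- Let λ = (kπ₁,…,kπ_t,1^r) with positive integers k, π₁,…,π_t and 1 ≤ r ≤ k−1. Then the pair (λ, 1) satisfies the cutting condition. -/
/-!
A block of `μ` equal to `1 + ΣI` can be cut into `1` and `ΣI` as soon as the group of blocks
of `λ` merged into it contains a `1`. Modulo `k` every block of `λ` is `0` or `1`, so a group
without a `1` sums to `0 mod k`, whereas `1 + ΣI ≡ 1 + c`, where `c` is the number of `1`s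
in `I` and `1 ≤ 1 + c ≤ r < k`.
-/

namespace Multiset

theorem sum_modEq_count_mul {s : Multiset ℕ} {a k : ℕ} (h : ∀ x ∈ s, x = a ∨ k ∣ x) :
    s.sum ≡ s.count a * a [MOD k] := by
  induction s using Multiset.induction_on with
  | empty => simp [Nat.ModEq]
  | cons x s ih =>
    have ih := ih fun y hy => h y (mem_cons_of_mem hy)
    by_cases hxa : x = a
    · rw [hxa, sum_cons, count_cons_self, add_mul, one_mul, add_comm _ a]
      exact ih.add_left a
    · have hx : x ≡ 0 [MOD k] :=
        Nat.modEq_zero_iff_dvd.mpr ((h x (mem_cons_self x s)).resolve_left hxa)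
      rw [sum_cons, count_cons_of_ne (Ne.symm hxa), ← zero_add (count a s * a)]
      exact hx.add ih

end Multiset

section

open Multiset

theorem PartCoarsen.split_group {P : Multiset (Multiset ℕ)} {lam : Multiset ℕ}
    (hne : ∀ p ∈ P, p ≠ 0) (hsum : P.sum = lam) {G H H' : Multiset ℕ} (hG : G ∈ P)
    (hsplit : H + H' = G) (hH : H ≠ 0) (hH' : H' ≠ 0) :
    PartCoarsen (H.sum ::ₘ H'.sum ::ₘ (P.map Multiset.sum).erase G.sum) lam := by
  have hP : G ::ₘ P.erase G = P := cons_erase hG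
  refine ⟨H ::ₘ H' ::ₘ P.erase G, ?_, ?_, ?_⟩
  · simp only [mem_cons]
    rintro p (rfl | rfl | hp)
    exacts [hH, hH', hne p (mem_of_mem_erase hp)]
  · rw [sum_cons, sum_cons, ← add_assoc, hsplit, ← sum_cons, hP, hsum]
  · rw [map_cons, map_cons, ← erase_cons_head G.sum (map sum (P.erase G)), ← map_cons, hP]

theorem cuttingCondition_of_forall_mem {lam : Multiset ℕ} {pb : ℕ} (hpb : pb ∈ lam)
    (hpos : ∀ a ∈ lam, 0 < a)
    (hmem : ∀ G I : Multiset ℕ, G ≤ lam → I ≤ lam.erase pb → G.sum = pb + I.sum →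
      pb ∈ G) :
    CuttingCondition lam pb := by
  refine ⟨hpb, ?_⟩
  rintro mu eta I ⟨P, hne, hsum, rfl⟩ heta hI hIle rfl
  obtain ⟨G, hG, hGsum⟩ := mem_map.mp heta
  have hGle : G ≤ lam := hsum ▸ le_sum_of_mem hG
  have hpbG : pb ∈ G := hmem G I hGle hIle hGsum
  have hrest : (G.erase pb).sum = I.sum := by
    have := sum_erase hpbG
    omega
  have hIpos : 0 < I.sum := by
    obtain ⟨a, ha⟩ := exists_mem_of_ne_zero hI
    exact (hpos a (mem_of_le (hIle.trans (erase_le pb lam)) ha)).trans_le (le_sum_of_mem ha)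
  have hrest_ne : G.erase pb ≠ 0 := by
    rintro h
    rw [h, sum_zero] at hrest
    omega
  have := PartCoarsen.split_group hne hsum hG (singleton_add pb (G.erase pb) ▸ cons_erase hpbG)
    (singleton_ne_zero pb) hrest_ne
  rwa [sum_singleton, hrest, hGsum] at this

theorem one_mem_of_sum_eq_one_add {lam G I : Multiset ℕ} {k : ℕ}
    (hdvd : ∀ a ∈ lam, a = 1 ∨ k ∣ a) (hone : 1 ∈ lam) (hcount : lam.count 1 < k)
    (hG : G ≤ lam) (hI : I ≤ lam.erase 1) (hsum : G.sum = 1 + I.sum) : 1 ∈ G := by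
  by_contra h1G
  have hGmod : G.sum ≡ 0 [MOD k] := by
    simpa [count_eq_zero.mpr h1G] using sum_modEq_count_mul fun a ha => hdvd a (mem_of_le hG ha)
  have hImod : I.sum ≡ I.count 1 [MOD k] := by
    simpa using sum_modEq_count_mul fun a ha =>
      hdvd a (mem_of_le (hI.trans (erase_le 1 lam)) ha)
  have hIcount : I.count 1 + 1 ≤ lam.count 1 := by
    have := count_le_of_le 1 hI
    rw [count_erase_self] at this
    have := count_pos.mpr hone
    omega
  have : 1 + I.count 1 ≡ 0 [MOD k] := (hImod.add_left 1).symm.trans (hsum ▸ hGmod)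
  rw [Nat.ModEq, Nat.zero_mod, Nat.mod_eq_of_lt (by omega)] at this
  omega

end

theorem cutting_condition_ones_general (k t r : ℕ) (pi : ℕ → ℕ)
    (hpi : ∀ i, 1 ≤ i → i ≤ t → 0 < pi i)
    (hr1 : 1 ≤ r) (hrk : r ≤ k - 1)
    (lam : Multiset ℕ)
    (hlam : lam = (Finset.Icc 1 t).sum (fun i => ({k * pi i} : Multiset ℕ)) +
      Multiset.replicate r 1) :
    CuttingCondition lam 1 := by
  set M := (Finset.Icc 1 t).sum fun i => ({k * pi i} : Multiset ℕ)
  have hM : ∀ a ∈ M, k ∣ a ∧ 0 < a := by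
    intro a ha
    obtain ⟨i, hi, hai⟩ := Multiset.mem_sum.mp ha
    obtain ⟨hi1, hit⟩ := Finset.mem_Icc.mp hi
    rw [Multiset.mem_singleton.mp hai]
    exact ⟨dvd_mul_right k (pi i), Nat.mul_pos (by omega) (hpi i hi1 hit)⟩
  have hmem : ∀ a ∈ lam, a = 1 ∨ (k ∣ a ∧ 0 < a) := by
    intro a ha
    rw [hlam, Multiset.mem_add] at ha
    exact ha.symm.imp Multiset.eq_of_mem_replicate (hM a)
  have hcount : lam.count 1 = r := by
    have h1M : 1 ∉ M := fun h => by
      have := Nat.le_of_dvd one_pos (hM 1 h).1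
      omega
    rw [hlam, Multiset.count_add, Multiset.count_replicate_self, Multiset.count_eq_zero.mpr h1M,
      zero_add]
  have hone : 1 ∈ lam := Multiset.count_pos.mp (by omega)
  refine cuttingCondition_of_forall_mem hone ?_ fun G I hG hI hsum =>
    one_mem_of_sum_eq_one_add (fun a ha => (hmem a ha).imp_right And.left) hone (by omega)
      hG hI hsum
  intro a ha
  rcases hmem a ha with rfl | h
  exacts [one_pos, h.2]

/-- for λ = (kπ₁,…,kπ_t,1^r) with 1 ≤ r ≤ k - 1, the pair (λ, 1)
satisfies the cutting condition. -/
theorem cutting_condition_ones (k t r : ℕ) (pi : ℕ → ℕ)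
    (hk : 0 < k) (hpi : ∀ i, 1 ≤ i → i ≤ t → 0 < pi i)
    (hr1 : 1 ≤ r) (hrk : r ≤ k - 1)
    (lam : Multiset ℕ)
    (hlam : lam = (Finset.Icc 1 t).sum (fun i => ({k * pi i} : Multiset ℕ)) +
      Multiset.replicate r 1) :
    CuttingCondition lam 1 :=
  cutting_condition_ones_general k t r pi hpi hr1 hrk lam hlam
end

section
/- Let λ = (π₁,…,π_t) be a number partition of n with t ≥ 2 such that π₁ is independent and there is no trivial resonance π₁ = π_i for i ≥ 2. Let x be the vertex of δ_λ labeled by the composition [π₂+⋯+π_t, π₁]. Then the link of x in δ_λ is isomorphic to the simplicial complex δ_{(π₂,…,π_t)} for the number partition (π₂,…,π_t) of n − π₁. -/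
section SLinkLemmas

private lemma SLink_flatten_ne_nil {Q : List (List ℕ)} (hQ : ∀ q ∈ Q, q ≠ []) (h : Q ≠ []) :
    Q.flatten ≠ [] := by
  cases Q with
  | nil => exact absurd rfl h
  | cons q t =>
    simp only [List.flatten_cons, ne_eq, List.append_eq_nil_iff]
    rintro ⟨h1, -⟩
    exact hQ q (List.mem_cons_self) h1

private lemma SLink_regroup (P : List (List ℕ)) : ∀ Q : List (List ℕ),
    (∀ p ∈ P, p ≠ []) → (∀ q ∈ Q, q ≠ []) → Q.map List.sum = P.flatten →
    ∃ R : List (List ℕ), (∀ r ∈ R, r ≠ []) ∧ R.flatten = Q.flatten ∧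
      R.map List.sum = P.map List.sum := by
  induction P with
  | nil =>
    intro Q _ _ h
    have : Q = [] := by simpa using congrArg List.length h
    subst this
    exact ⟨[], by simp, rfl, rfl⟩
  | cons p P ih =>
    intro Q hP hQ h
    have hmap : Q.map List.sum = p ++ P.flatten := by simpa using h
    have htake : (Q.take p.length).map List.sum = p := by
      rw [List.map_take, hmap, List.take_left]
    have hdrop : (Q.drop p.length).map List.sum = P.flatten := by
      rw [List.map_drop, hmap, List.drop_left]
    obtain ⟨R', hR'ne, hR'f, hR's⟩ := ih (Q.drop p.length)
      (fun q hq => hP q (List.mem_cons_of_mem _ hq))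
      (fun q hq => hQ q (List.mem_of_mem_drop hq)) hdrop
    refine ⟨(Q.take p.length).flatten :: R', ?_, ?_, ?_⟩
    · intro r hr
      rcases List.mem_cons.mp hr with rfl | hr
      · apply SLink_flatten_ne_nil (fun q hq => hQ q (List.mem_of_mem_take hq))
        intro hnil
        have : p = [] := by rw [← htake, hnil]; rfl
        exact hP p (List.mem_cons_self) this
      · exact hR'ne r hr
    · simp only [List.flatten_cons, hR'f]
      rw [← List.flatten_append, List.take_append_drop]
    · simp only [List.map_cons, hR's, List.map_cons]
      congr 1
      rw [List.sum_flatten, htake]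

private lemma SLink_refines_trans {x y z : List ℕ} (hxy : Refines x y) (hyz : Refines y z) :
    Refines x z := by
  obtain ⟨P, hPne, hPf, hPs⟩ := hxy
  obtain ⟨Q, hQne, hQf, hQs⟩ := hyz
  obtain ⟨R, hRne, hRf, hRs⟩ := SLink_regroup P Q hPne hQne (by rw [hQs, hPf])
  exact ⟨R, hRne, by rw [hRf, hQf], by rw [hRs, hPs]⟩

private lemma SLink_refines_sum {x y : List ℕ} (h : Refines x y) : x.sum = y.sum := by
  obtain ⟨P, -, hf, hs⟩ := h
  rw [← hf, ← hs, List.sum_flatten]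

private lemma SLink_refines_pos {x y : List ℕ} (h : Refines x y) (hy : ∀ a ∈ y, 0 < a) :
    ∀ a ∈ x, 0 < a := by
  obtain ⟨P, hne, hf, hs⟩ := h
  intro a ha
  rw [← hs, List.mem_map] at ha
  obtain ⟨p, hp, rfl⟩ := ha
  have hpne := hne p hp
  cases p with
  | nil => exact absurd rfl hpne
  | cons b q =>
    have hb : 0 < b := by
      apply hy
      rw [← hf]
      exact List.mem_flatten.mpr ⟨_, hp, List.mem_cons_self⟩
    simp only [List.sum_cons]
    omega

private lemma SLink_refines_ne_nil {x y : List ℕ} (h : Refines x y) (hy : y ≠ []) : x ≠ [] := by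
  obtain ⟨P, hne, hf, hs⟩ := h
  intro hx
  have : P = [] := by simpa [hx] using congrArg List.length hs
  subst this
  exact hy hf.symm

private lemma SLink_Dset_sum {rest : List ℕ} {x : List ℕ}
    (hx : x ∈ Dset (rest : Multiset ℕ)) : x.sum = rest.sum := by
  obtain ⟨y, hy, hr⟩ := hx
  rw [SLink_refines_sum hr, ← Multiset.sum_coe, hy, Multiset.sum_coe]

private lemma SLink_Dset_pos {rest : List ℕ} (hrest : ∀ a ∈ rest, 0 < a) {x : List ℕ}
    (hx : x ∈ Dset (rest : Multiset ℕ)) : ∀ a ∈ x, 0 < a := by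
  obtain ⟨y, hy, hr⟩ := hx
  refine SLink_refines_pos hr (fun a ha => hrest a ?_)
  rw [← Multiset.mem_coe, hy, Multiset.mem_coe] at ha
  exact ha

private lemma SLink_Dset_ne_nil {rest : List ℕ} (hne : rest ≠ []) {x : List ℕ}
    (hx : x ∈ Dset (rest : Multiset ℕ)) : x ≠ [] := by
  obtain ⟨y, hy, hr⟩ := hx
  refine SLink_refines_ne_nil hr (fun h => hne ?_)
  subst h
  simpa using hy.symm

private lemma SLink_Dset_mono {lam : Multiset ℕ} {x c : List ℕ} (hc : c ∈ Dset lam)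
    (h : Refines x c) : x ∈ Dset lam := by
  obtain ⟨y, hy, hr⟩ := hc
  exact ⟨y, hy, SLink_refines_trans h hr⟩

private lemma SLink_exists_finset (l : List ℕ) : ∀ S : Multiset ℕ, S ≤ (l : Multiset ℕ) →
    S ≠ 0 → ∃ J : Finset ℕ, J.Nonempty ∧ (∀ a ∈ J, a < l.length) ∧
      (J.sum fun a => l.getD a 0) = S.sum := by
  induction l with
  | nil =>
    intro S hle hS
    exact absurd (le_antisymm (by simpa using hle) zero_le) hS
  | cons a l ih =>
    intro S hle hS
    rw [show ((a :: l : List ℕ) : Multiset ℕ) = a ::ₘ ↑l by simp] at hle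
    by_cases ha : a ∈ S
    · have hS' : S.erase a ≤ (l : Multiset ℕ) := by
        have := Multiset.erase_le_erase a hle
        simpa using this
      by_cases h0 : S.erase a = 0
      · refine ⟨{0}, ⟨0, Finset.mem_singleton_self 0⟩, by simp, ?_⟩
        have : S = {a} := by
          conv_lhs => rw [← Multiset.cons_erase ha, h0]
          rfl
        simp [this]
      · obtain ⟨J', hJne, hJlt, hJsum⟩ := ih (S.erase a) hS' h0
        refine ⟨insert 0 (J'.image (· + 1)), ⟨0, Finset.mem_insert_self _ _⟩, ?_, ?_⟩
        · intro b hb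
          rcases Finset.mem_insert.mp hb with rfl | hb
          · simp
          · obtain ⟨k, hk, rfl⟩ := Finset.mem_image.mp hb
            have := hJlt k hk
            simp only [List.length_cons]
            omega
        · rw [Finset.sum_insert (by
            intro h
            obtain ⟨k, -, hk⟩ := Finset.mem_image.mp h
            omega)]
          rw [Finset.sum_image (by intro x _ y _ h; simp only at h; omega)]
          simp only [List.getD_cons_succ, List.getD_cons_zero]
          rw [hJsum]
          conv_rhs => rw [← Multiset.cons_erase ha]
          simp
    · have hS' : S ≤ (l : Multiset ℕ) := by
        rw [Multiset.le_iff_count] at hle ⊢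
        intro b
        rcases eq_or_ne b a with rfl | hb
        · simp [Multiset.count_eq_zero_of_notMem ha]
        · have := hle b
          rwa [Multiset.count_cons_of_ne hb] at this
      obtain ⟨J', hJne, hJlt, hJsum⟩ := ih S hS' hS
      refine ⟨J'.image (· + 1), hJne.image _, ?_, ?_⟩
      · intro b hb
        obtain ⟨k, hk, rfl⟩ := Finset.mem_image.mp hb
        have := hJlt k hk
        simp only [List.length_cons]
        omega
      · rw [Finset.sum_image (by intro x _ y _ h; simp only at h; omega)]
        simpa using hJsum

private lemma SLink_noSubsum {v : ℕ} {rest : List ℕ}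
    (hind : IsIndepAt (v :: rest) 0) (htriv : ∀ a ∈ rest, a ≠ v)
    {S : Multiset ℕ} (hle : S ≤ (rest : Multiset ℕ)) (hS : S ≠ 0) : S.sum ≠ v := by
  intro hsum
  obtain ⟨J', hJne, hJlt, hJsum⟩ := SLink_exists_finset rest S hle hS
  set J := J'.image (· + 1) with hJ
  have hq : ∃ q ∈ J, (v :: rest).getD q 0 = (v :: rest).getD 0 0 := by
    apply hind {0} J ⟨0, Finset.mem_singleton_self 0⟩ (hJne.image _)
    · rw [Finset.disjoint_singleton_left]
      intro h
      obtain ⟨k, -, hk⟩ := Finset.mem_image.mp h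
      omega
    · intro a ha
      rcases Finset.mem_union.mp ha with ha | ha
      · simp only [Finset.mem_singleton] at ha
        subst ha
        simp
      · obtain ⟨k, hk, rfl⟩ := Finset.mem_image.mp ha
        have := hJlt k hk
        simp only [List.length_cons]
        omega
    · exact Finset.mem_singleton_self 0
    · rw [Finset.sum_singleton, Finset.sum_image (by intro x _ y _ h; simp only at h; omega)]
      simp only [List.getD_cons_zero, List.getD_cons_succ]
      rw [hJsum, hsum]
  obtain ⟨q, hqJ, hqv⟩ := hq
  obtain ⟨k, hk, rfl⟩ := Finset.mem_image.mp hqJ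
  simp only [List.getD_cons_succ, List.getD_cons_zero] at hqv
  have hklt := hJlt k hk
  rw [List.getD_eq_getElem rest 0 hklt] at hqv
  exact htriv _ (List.getElem_mem hklt) hqv

private lemma SLink_runV {v : ℕ} {rest : List ℕ} (hv : 0 < v) (hrest : ∀ a ∈ rest, 0 < a)
    (hind : IsIndepAt (v :: rest) 0) (htriv : ∀ a ∈ rest, a ≠ v)
    {r : List ℕ} (hr : r ≠ [])
    (hle : (r : Multiset ℕ) ≤ ((v :: rest : List ℕ) : Multiset ℕ))
    (hsum : r.sum = v) : r = [v] := by
  have hpos : ∀ a ∈ r, 0 < a := by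
    intro a ha
    have : a ∈ (v :: rest) := by
      have := Multiset.mem_of_le hle (Multiset.mem_coe.mpr ha)
      simpa using this
    rcases List.mem_cons.mp this with rfl | h
    · exact hv
    · exact hrest a h
  by_cases hmem : v ∈ r
  · obtain ⟨s, t, rfl⟩ := List.append_of_mem hmem
    have hsum' : s.sum + (v + t.sum) = v := by simpa using hsum
    have hs0 : s.sum = 0 := by omega
    have ht0 : t.sum = 0 := by omega
    have hs : s = [] := by
      cases s with
      | nil => rfl
      | cons b s' =>
        have := hpos b (by simp)
        simp only [List.sum_cons] at hs0
        omega
    have ht : t = [] := by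
      cases t with
      | nil => rfl
      | cons b t' =>
        have := hpos b (by simp)
        simp only [List.sum_cons] at ht0
        omega
    rw [hs, ht]; rfl
  · have hle' : (r : Multiset ℕ) ≤ (rest : Multiset ℕ) := by
      rw [show ((v :: rest : List ℕ) : Multiset ℕ) = v ::ₘ ↑rest by simp] at hle
      rw [Multiset.le_iff_count] at hle ⊢
      intro b
      rcases eq_or_ne b v with rfl | hb
      · simp [Multiset.count_eq_zero_of_notMem (fun h => hmem (Multiset.mem_coe.mp h))]
      · have := hle b
        rwa [Multiset.count_cons_of_ne hb] at this
    exact absurd hsum (SLink_noSubsum hind htriv hle' (by simpa using hr))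

private lemma SLink_refines_append_v {c y : List ℕ} (v : ℕ) (h : Refines c y) :
    Refines (c ++ [v]) (y ++ [v]) := by
  obtain ⟨P, hne, hf, hs⟩ := h
  refine ⟨P ++ [[v]], ?_, ?_, ?_⟩
  · intro p hp
    rcases List.mem_append.mp hp with hp | hp
    · exact hne p hp
    · simp only [List.mem_singleton] at hp
      subst hp
      simp
  · simp [hf]
  · simp [hs]

private lemma SLink_exists_concat {α : Type*} {P : List α} (h : P ≠ []) :
    ∃ P₁ a, P = P₁ ++ [a] := by
  rcases List.eq_nil_or_concat P with h' | ⟨P₁, a, h'⟩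
  · exact absurd h' h
  · exact ⟨P₁, a, by simpa using h'⟩

private lemma SLink_nil_of_sum_zero {l : List ℕ} (hpos : ∀ a ∈ l, 0 < a) (h : l.sum = 0) :
    l = [] := by
  cases l with
  | nil => rfl
  | cons a l' =>
    have := hpos a (by simp)
    simp only [List.sum_cons] at h
    omega

private lemma SLink_eq_single_of_flatten {Q : List (List ℕ)} {v : ℕ}
    (hQne : ∀ q ∈ Q, q ≠ []) (hQ : Q ≠ []) (hf : Q.flatten = [v]) : Q = [[v]] := by
  cases Q with
  | nil => exact absurd rfl hQ
  | cons q Q' =>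
    cases q with
    | nil => exact absurd rfl (hQne [] (List.mem_cons_self))
    | cons a q' =>
      simp only [List.flatten_cons, List.cons_append, List.cons.injEq] at hf
      obtain ⟨rfl, hf⟩ := hf
      rw [List.append_eq_nil_iff] at hf
      obtain ⟨rfl, hf⟩ := hf
      cases Q' with
      | nil => rfl
      | cons q'' Q'' =>
        exact absurd hf (SLink_flatten_ne_nil
          (fun q hq => hQne q (List.mem_cons_of_mem _ hq)) (List.cons_ne_nil _ _))

private lemma SLink_map_singleton_flatten (l : List ℕ) :
    (l.map fun a => [a]).flatten = l := by
  induction l with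
  | nil => rfl
  | cons a l ih => simp [ih]

end SLinkLemmas

/-- let λ = (v, π₂,…,π_t) with v = π₁ independent and not trivially
resonant with any other block, and let x be the vertex [π₂+⋯+π_t, v] of δ_λ.  Then
appending the block v is an order-preserving bijection from D_{(π₂,…,π_t)} onto the
faces of δ_λ containing x, and merging v into the last block is a bijection from
D_{(π₂,…,π_t)} onto the faces F of the link of x (those with x ∉ F and F ∪ {x} a
face); hence the link of x in δ_λ is isomorphic to δ_{(π₂,…,π_t)}. -/
theorem link_of_vertex_iso (v : ℕ) (rest : List ℕ)
    (hv : 0 < v) (hrest : ∀ a ∈ rest, 0 < a) (hne : rest ≠ [])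
    (hind : IsIndepAt (v :: rest) 0) (htriv : ∀ a ∈ rest, a ≠ v) :
    Set.BijOn (fun c => c ++ [v]) (Dset (rest : Multiset ℕ))
      {G | G ∈ Dset ((v :: rest : List ℕ) : Multiset ℕ) ∧
        Refines [rest.sum, v] G} ∧
    (∀ c ∈ Dset (rest : Multiset ℕ), ∀ c' ∈ Dset (rest : Multiset ℕ),
      (Refines c c' ↔ Refines (c ++ [v]) (c' ++ [v]))) ∧
    Set.BijOn (fun c => c.dropLast ++ [c.getLastD 0 + v]) (Dset (rest : Multiset ℕ))
      {F | F ∈ Dset ((v :: rest : List ℕ) : Multiset ℕ) ∧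
        ¬ Refines [rest.sum, v] F ∧
        ∃ G ∈ Dset ((v :: rest : List ℕ) : Multiset ℕ),
          Refines F G ∧ Refines [rest.sum, v] G ∧ G.length = F.length + 1} := by

  -- the arrangement multiset equality used repeatedly
  have hcoe : ∀ y : List ℕ, (y : Multiset ℕ) = (rest : Multiset ℕ) →
      ((y ++ [v] : List ℕ) : Multiset ℕ) = ((v :: rest : List ℕ) : Multiset ℕ) := by
    intro y hy
    rw [Multiset.coe_eq_coe]
    exact (List.perm_append_singleton v y).trans ((Multiset.coe_eq_coe.mp hy).cons v)
  -- part 1, forward direction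
  have mapsto1 : ∀ c ∈ Dset (rest : Multiset ℕ),
      (c ++ [v]) ∈ Dset ((v :: rest : List ℕ) : Multiset ℕ) ∧
        Refines [rest.sum, v] (c ++ [v]) := by
    intro c hc
    obtain ⟨y, hy, hr⟩ := hc
    refine ⟨⟨y ++ [v], hcoe y hy, SLink_refines_append_v v hr⟩, ?_⟩
    refine ⟨[c, [v]], ?_, by simp, ?_⟩
    · intro p hp
      rcases List.mem_cons.mp hp with rfl | hp
      · exact SLink_Dset_ne_nil hne ⟨y, hy, hr⟩
      · simp only [List.mem_singleton] at hp
        subst hp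
        simp
    · simp [SLink_Dset_sum ⟨y, hy, hr⟩]
  -- part 1, surjectivity (the key use of independence)
  have surj1 : ∀ G, G ∈ Dset ((v :: rest : List ℕ) : Multiset ℕ) → Refines [rest.sum, v] G →
      ∃ c ∈ Dset (rest : Multiset ℕ), G = c ++ [v] := by
    intro G hG hRef
    obtain ⟨P, hPne, hPf, hPs⟩ := hRef
    obtain ⟨p₁, p₂, rfl⟩ : ∃ p₁ p₂, P = [p₁, p₂] := by
      rcases P with _ | ⟨p₁, _ | ⟨p₂, _ | ⟨p₃, P⟩⟩⟩
      · simp at hPs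
      · simp at hPs
      · exact ⟨p₁, p₂, rfl⟩
      · simp at hPs
    simp only [List.map_cons, List.map_nil, List.cons.injEq, and_true] at hPs
    obtain ⟨hp₁s, hp₂s⟩ := hPs
    have hflat : p₁ ++ p₂ = G := by simpa using hPf
    obtain ⟨y, hy, Q, hQne, hQf, hQs⟩ := hG
    have htake : (Q.take p₁.length).map List.sum = p₁ := by
      rw [List.map_take, hQs, ← hflat, List.take_left]
    have hdrop : (Q.drop p₁.length).map List.sum = p₂ := by
      rw [List.map_drop, hQs, ← hflat, List.drop_left]
    have hQ₂ne : Q.drop p₁.length ≠ [] := by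
      intro h
      rw [h] at hdrop
      exact hPne p₂ (by simp) hdrop.symm
    have hQ₂mem : ∀ q ∈ Q.drop p₁.length, q ≠ [] :=
      fun q hq => hQne q (List.mem_of_mem_drop hq)
    have hsplit : (Q.take p₁.length).flatten ++ (Q.drop p₁.length).flatten = y := by
      rw [← List.flatten_append, List.take_append_drop, hQf]
    have hQ₂le : ((Q.drop p₁.length).flatten : Multiset ℕ) ≤
        ((v :: rest : List ℕ) : Multiset ℕ) := by
      rw [← hy, ← hsplit]
      rw [show (((Q.take p₁.length).flatten ++ (Q.drop p₁.length).flatten : List ℕ) :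
        Multiset ℕ) = ↑(Q.take p₁.length).flatten + ↑(Q.drop p₁.length).flatten by simp]
      exact self_le_add_left _ _
    have hQ₂sum : (Q.drop p₁.length).flatten.sum = v := by
      rw [List.sum_flatten, hdrop, hp₂s]
    have hQ₂flat : (Q.drop p₁.length).flatten = [v] :=
      SLink_runV hv hrest hind htriv (SLink_flatten_ne_nil hQ₂mem hQ₂ne) hQ₂le hQ₂sum
    have hQ₂ : Q.drop p₁.length = [[v]] :=
      SLink_eq_single_of_flatten hQ₂mem hQ₂ne hQ₂flat
    have hp₂ : p₂ = [v] := by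
      rw [← hdrop, hQ₂]
      simp
    have hyv : y = (Q.take p₁.length).flatten ++ [v] := by
      rw [← hsplit, hQ₂flat]
    have hperm : List.Perm (Q.take p₁.length).flatten rest := by
      have h1 : List.Perm ((Q.take p₁.length).flatten ++ [v]) (v :: rest) := by
        rw [← hyv]
        exact Multiset.coe_eq_coe.mp (by rw [hy])
      exact ((List.perm_append_singleton v _).symm.trans h1).cons_inv
    refine ⟨p₁, ⟨(Q.take p₁.length).flatten, Multiset.coe_eq_coe.mpr hperm,
      ⟨Q.take p₁.length, fun q hq => hQne q (List.mem_of_mem_take hq), rfl, htake⟩⟩, ?_⟩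
    rw [← hflat, hp₂]
  -- part 2, backward direction
  have back2 : ∀ c c' : List ℕ, (∀ a ∈ c', 0 < a) →
      Refines (c ++ [v]) (c' ++ [v]) → Refines c c' := by
    rintro c c' hpos ⟨P, hPne, hPf, hPs⟩
    have hPn : P ≠ [] := by
      intro h
      subst h
      simp only [List.flatten_nil] at hPf
      exact (List.append_ne_nil_of_right_ne_nil c' (by simp)) hPf.symm
    obtain ⟨P₁, r, rfl⟩ := SLink_exists_concat hPn
    have hr_ne : r ≠ [] := hPne r (by simp)
    obtain ⟨r', a, rfl⟩ := SLink_exists_concat hr_ne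
    rw [List.flatten_append] at hPf
    rw [List.map_append] at hPs
    have hPf' : (P₁.flatten ++ r') ++ [a] = c' ++ [v] := by
      rw [← hPf]
      simp
    obtain ⟨hPf'', ha⟩ : P₁.flatten ++ r' = c' ∧ a = v := by
      have := List.append_inj' hPf' rfl
      simpa using this
    have hPs' : P₁.map List.sum ++ [(r' ++ [a]).sum] = c ++ [v] := by simpa using hPs
    obtain ⟨hPs'', hrs⟩ : P₁.map List.sum = c ∧ (r' ++ [a]).sum = v := by
      have := List.append_inj' hPs' rfl
      simpa using this
    have hr'0 : r'.sum = 0 := by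
      simp only [List.sum_append, List.sum_cons, List.sum_nil] at hrs
      omega
    have hr'nil : r' = [] := by
      refine SLink_nil_of_sum_zero (fun b hb => hpos b ?_) hr'0
      rw [← hPf'']
      exact List.mem_append_right _ hb
    subst hr'nil
    rw [List.append_nil] at hPf''
    exact ⟨P₁, fun p hp => hPne p (List.mem_append_left _ hp), hPf'', hPs''⟩
  -- part 3, the image computation
  have himg : ∀ (c₀ : List ℕ) (b : ℕ),
      ((c₀ ++ [b]).dropLast ++ [(c₀ ++ [b]).getLastD 0 + v]) = c₀ ++ [b + v] := by
    intro c₀ b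
    simp
  refine ⟨⟨?_, ?_, ?_⟩, ?_, ?_, ?_, ?_⟩
  · -- part 1 MapsTo
    intro c hc
    exact (mapsto1 c hc)
  · -- part 1 InjOn
    intro c _ c' _ h
    have := List.append_inj' h rfl
    exact this.1
  · -- part 1 SurjOn
    intro G hG
    obtain ⟨c, hc, rfl⟩ := surj1 G hG.1 hG.2
    exact ⟨c, hc, rfl⟩
  · -- part 2
    intro c hc c' hcc
    constructor
    · exact SLink_refines_append_v v
    · exact back2 c c' (SLink_Dset_pos hrest hcc)
  · -- part 3 MapsTo
    intro c hc
    obtain ⟨c₀, b, rfl⟩ := SLink_exists_concat (SLink_Dset_ne_nil hne hc)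
    have hb : 0 < b := SLink_Dset_pos hrest hc b (by simp)
    have hcc := hc
    simp only [Set.mem_setOf_eq, himg]
    obtain ⟨y, hy, P, hPne, hPf, hPs⟩ := hc
    have hPn : P ≠ [] := by
      intro h
      subst h
      simp at hPs
    obtain ⟨P₁, r, rfl⟩ := SLink_exists_concat hPn
    rw [List.map_append] at hPs
    have hPs0 : P₁.map List.sum ++ [r.sum] = c₀ ++ [b] := by simpa using hPs
    obtain ⟨hPs', hrs⟩ : P₁.map List.sum = c₀ ∧ r.sum = b := by
      have := List.append_inj' hPs0 rfl
      simpa using this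
    rw [List.flatten_append] at hPf
    have hPf' : P₁.flatten ++ r = y := by simpa using hPf
    refine ⟨?_, ?_, ?_⟩
    · -- F ∈ Dset (v :: rest)
      refine ⟨y ++ [v], hcoe y hy, P₁ ++ [r ++ [v]], ?_, ?_, ?_⟩
      · intro p hp
        rcases List.mem_append.mp hp with hp | hp
        · exact hPne p (List.mem_append_left _ hp)
        · simp only [List.mem_singleton] at hp
          subst hp
          exact List.append_ne_nil_of_right_ne_nil _ (by simp)
      · rw [List.flatten_append, ← hPf']
        simp
      · rw [List.map_append]
        simp [hPs', hrs]
    · -- x does not refine F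
      rintro ⟨W, hWne, hWf, hWs⟩
      obtain ⟨w₁, w₂, rfl⟩ : ∃ w₁ w₂, W = [w₁, w₂] := by
        rcases W with _ | ⟨w₁, _ | ⟨w₂, _ | ⟨w₃, W⟩⟩⟩
        · simp at hWs
        · simp at hWs
        · exact ⟨w₁, w₂, rfl⟩
        · simp at hWs
      simp only [List.map_cons, List.map_nil, List.cons.injEq, and_true] at hWs
      obtain ⟨-, hw₂s⟩ := hWs
      have hWflat : w₁ ++ w₂ = c₀ ++ [b + v] := by simpa using hWf
      have hw₂ne : w₂ ≠ [] := hWne w₂ (by simp)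
      obtain ⟨w₂', a, rfl⟩ := SLink_exists_concat hw₂ne
      have : (w₁ ++ w₂') ++ [a] = c₀ ++ [b + v] := by rw [← hWflat]; simp
      obtain ⟨-, rfl⟩ : w₁ ++ w₂' = c₀ ∧ a = b + v := by
        have := List.append_inj' this rfl
        simpa using this
      simp only [List.sum_append, List.sum_cons, List.sum_nil] at hw₂s
      omega
    · -- the face G
      refine ⟨(c₀ ++ [b]) ++ [v], (mapsto1 _ hcc).1, ?_, (mapsto1 _ hcc).2, by simp⟩
      refine ⟨(c₀.map fun a => [a]) ++ [[b, v]], ?_, ?_, ?_⟩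
      · intro p hp
        rcases List.mem_append.mp hp with hp | hp
        · obtain ⟨a, -, rfl⟩ := List.mem_map.mp hp
          simp
        · simp only [List.mem_singleton] at hp
          subst hp
          simp
      · rw [List.flatten_append, SLink_map_singleton_flatten]
        simp
      · rw [List.map_append, List.map_map]
        simp [Function.comp_def]
  · -- part 3 InjOn
    intro c hc c' hcc h
    obtain ⟨c₀, b, rfl⟩ := SLink_exists_concat (SLink_Dset_ne_nil hne hc)
    obtain ⟨c₀', b', rfl⟩ := SLink_exists_concat (SLink_Dset_ne_nil hne hcc)
    simp only [himg] at h
    obtain ⟨rfl, hbv⟩ : c₀ = c₀' ∧ b + v = b' + v := by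
      have := List.append_inj' h rfl
      simpa using this
    have : b = b' := by omega
    rw [this]
  · -- part 3 SurjOn
    rintro F ⟨hF1, hF2, G, hG1, hFG, hxG, hlen⟩
    obtain ⟨c, hc, rfl⟩ := surj1 G hG1 hxG
    obtain ⟨P, hPne, hPf, hPs⟩ := hFG
    have hPn : P ≠ [] := by
      intro h
      subst h
      simp at hPf
    obtain ⟨P₁, r, rfl⟩ := SLink_exists_concat hPn
    have hr_ne : r ≠ [] := hPne r (by simp)
    obtain ⟨r'', a, rfl⟩ := SLink_exists_concat hr_ne
    rw [List.flatten_append] at hPf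
    have hPf' : (P₁.flatten ++ r'') ++ [a] = c ++ [v] := by rw [← hPf]; simp
    obtain ⟨hPf'', ha⟩ : P₁.flatten ++ r'' = c ∧ a = v := by
      have := List.append_inj' hPf' rfl
      simpa using this
    rw [ha] at hPs
    rw [List.map_append] at hPs
    have hF : F = P₁.map List.sum ++ [r''.sum + v] := by
      rw [← hPs]
      simp
    by_cases hr'' : r'' = []
    · -- would contradict ¬ Refines [rest.sum, v] F
      exfalso
      subst hr''
      rw [List.append_nil] at hPf''
      have hP₁n : P₁ ≠ [] := by
        intro h
        subst h
        exact SLink_Dset_ne_nil hne hc hPf''.symm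
      refine hF2 ⟨[P₁.map List.sum, [v]], ?_, ?_, ?_⟩
      · intro p hp
        rcases List.mem_cons.mp hp with rfl | hp
        · intro h
          exact hP₁n (List.map_eq_nil_iff.mp h)
        · simp only [List.mem_singleton] at hp
          subst hp
          simp
      · rw [hF]
        simp
      · have : (P₁.map List.sum).sum = rest.sum := by
          rw [← List.sum_flatten, hPf'', SLink_Dset_sum hc]
        simp [this]
    · -- the preimage is P₁.map sum ++ [r''.sum]
      have hc₀ : (P₁.map List.sum ++ [r''.sum]) ∈ Dset (rest : Multiset ℕ) := by
        refine SLink_Dset_mono hc ⟨P₁ ++ [r''], ?_, ?_, ?_⟩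
        · intro p hp
          rcases List.mem_append.mp hp with hp | hp
          · exact hPne p (List.mem_append_left _ hp)
          · simp only [List.mem_singleton] at hp
            subst hp
            exact hr''
        · rw [List.flatten_append, ← hPf'']
          simp
        · simp
      refine ⟨P₁.map List.sum ++ [r''.sum], hc₀, ?_⟩
      show (P₁.map List.sum ++ [r''.sum]).dropLast ++
        [(P₁.map List.sum ++ [r''.sum]).getLastD 0 + v] = F
      rw [himg, ← hF]
end
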